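/- arXiv:0707.0165 — 7 statements merged into one kernel-verified Lean document; each statement's English description precedes it below -/
import Mathlib

section
/- If H and K are finitely generated subgroups of G, then the intersection H ∩ K is a finitely generated subgroup of G. (In particular, the amalgamated free product of two finite groups has the Howson property.) -/
/-!
In the Bass–Serre tree of `G₁ *_A G₂`, whose edges are the cosets `gA`, the edges of the geodesic
from `A` to `xA` are the cosets `pA`, where `p` is the head of the normal form of `x` times one of
its prefixes. Since geodesics in a tree form tripods, the geodesic to `xyA` lies in the geodesic
to `xA` together with `x` times the geodesic to `yA`. So a finitely generated subgroup `M` is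
quasiconvex: for some finite `F`, all these `p` for all `m ∈ M` lie in `M * F`. Quasiconvexity
passes to `H ⊓ K`, because `H f₁ ∩ K f₂` is empty or a right coset of `H ⊓ K`. Conversely a
quasiconvex subgroup is finitely generated: consecutive prefixes of the normal form of `m ∈ M`
differ by a letter from a finite set `S`, so `M` is generated by its elements in `F S F⁻¹`.
-/

open Monoid Monoid.PushoutI Monoid.PushoutI.NormalWord Pointwise

theorem Subgroup.mem_closure_of_chain {G : Type*} [Group G] {M : Subgroup G}
    {F S : Set G} {p : ℕ → G} (hp : ∀ k, p k ∈ (M : Set G) * F) (h0 : p 0 ∈ S)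
    (hstep : ∀ k, (p k)⁻¹ * p (k + 1) ∈ S) (n : ℕ) {m f : G} (hm : m ∈ M) (hf : f ∈ F)
    (hpn : p n = m * f) :
    m ∈ Subgroup.closure ((M : Set G) ∩ (S * F⁻¹ ∪ F * S * F⁻¹)) := by
  induction n generalizing m f with
  | zero =>
    exact Subgroup.subset_closure
      ⟨hm, Or.inl ⟨p 0, h0, f⁻¹, Set.inv_mem_inv.2 hf, by simp [hpn]⟩⟩
  | succ n ih =>
    obtain ⟨m', hm', f', hf', hpn'⟩ := hp n
    have hstep' : m'⁻¹ * m ∈ (M : Set G) ∩ (S * F⁻¹ ∪ F * S * F⁻¹) := by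
      refine ⟨M.mul_mem (M.inv_mem hm') hm, Or.inr ⟨f' * ((p n)⁻¹ * p (n + 1)),
        Set.mul_mem_mul hf' (hstep n), f⁻¹, Set.inv_mem_inv.2 hf, ?_⟩⟩
      rw [← hpn', hpn]
      group
    simpa using Subgroup.mul_mem _ (ih hm' hf' hpn'.symm) (Subgroup.subset_closure hstep')

theorem Subgroup.exists_finite_inter_mul_subset {G : Type*} [Group G] (H K : Subgroup G)
    {F₁ F₂ : Set G} (h₁ : F₁.Finite) (h₂ : F₂.Finite) :
    ∃ F : Set G, F.Finite ∧
      ((H : Set G) * F₁) ∩ ((K : Set G) * F₂) ⊆ ((H ⊓ K : Subgroup G) : Set G) * F := by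
  classical
  let r : G × G → G := fun q =>
    if h : (((H : Set G) * {q.1}) ∩ ((K : Set G) * {q.2})).Nonempty then h.some else 1
  refine ⟨r '' F₁ ×ˢ F₂, (h₁.prod h₂).image r, ?_⟩
  rintro _ ⟨hp₁, hp₂⟩
  obtain ⟨h, hh, f₁, hf₁, rfl⟩ := Set.mem_mul.1 hp₁
  obtain ⟨k, hk, f₂, hf₂, hhk⟩ := Set.mem_mul.1 hp₂
  have hne : (((H : Set G) * {f₁}) ∩ ((K : Set G) * {f₂})).Nonempty :=
    ⟨h * f₁, Set.mul_mem_mul hh rfl, k, hk, f₂, rfl, hhk⟩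
  have hr : r (f₁, f₂) = hne.some := dif_pos hne
  obtain ⟨hx₁, hx₂⟩ := hne.some_mem
  obtain ⟨h', hh', _, hf₁', hh'r⟩ := Set.mem_mul.1 hx₁
  obtain ⟨k', hk', _, hf₂', hk'r⟩ := Set.mem_mul.1 hx₂
  rw [Set.mem_singleton_iff.1 hf₁'] at hh'r
  rw [Set.mem_singleton_iff.1 hf₂'] at hk'r
  have hhk' : h * h'⁻¹ = k * k'⁻¹ :=
    calc h * h'⁻¹ = (h * f₁) * (h' * f₁)⁻¹ := by group
      _ = (k * f₂) * (k' * f₂)⁻¹ := by rw [hhk, hh'r, hk'r]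
      _ = k * k'⁻¹ := by group
  refine ⟨h * h'⁻¹, ⟨H.mul_mem hh (H.inv_mem hh'), hhk' ▸ K.mul_mem hk (K.inv_mem hk')⟩,
    r (f₁, f₂), ⟨(f₁, f₂), ⟨hf₁, hf₂⟩, rfl⟩, ?_⟩
  rw [hr, ← hh'r]
  group

namespace Monoid.CoprodI.Word

variable {ι : Type*} {M : ι → Type*} [∀ i, Monoid (M i)] [∀ i, DecidableEq (M i)] {i : ι}

theorem rcons_toList_tail_suffix (p : Pair M i) : (rcons p).toList.tail <:+ p.tail.toList := by
  unfold rcons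
  split_ifs
  · exact List.tail_suffix _
  · exact List.suffix_refl _

theorem tail_toList_suffix_rcons (p : Pair M i) : p.tail.toList <:+ (rcons p).toList := by
  unfold rcons
  split_ifs
  · exact List.suffix_refl _
  · exact List.suffix_cons _ _

theorem equivPair_tail_toList_suffix [DecidableEq ι] (w : Word M) :
    (equivPair i w).tail.toList <:+ w.toList := by
  simpa only [← equivPair_symm, Equiv.symm_apply_apply] using
    tail_toList_suffix_rcons (equivPair i w)

end Monoid.CoprodI.Word

namespace Monoid.PushoutI

variable {ι : Type*} {G : ι → Type*} [∀ i, Group (G i)] {A : Type*} [Group A]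
  {φ : ∀ i, A →* G i}

def ofList (l : List (Σ i, G i)) : PushoutI φ := (l.map fun x => of x.1 x.2).prod

@[simp]
theorem ofList_nil : ofList (φ := φ) [] = 1 := rfl

@[simp]
theorem ofList_append (l₁ l₂ : List (Σ i, G i)) :
    ofList (φ := φ) (l₁ ++ l₂) = ofList l₁ * ofList l₂ := by
  simp [ofList]

namespace NormalWord

variable {d : Transversal φ}

theorem prod_eq_base_mul_ofList (w : NormalWord d) :
    w.prod = base φ w.head * ofList w.toList := by
  rw [NormalWord.prod, CoprodI.Word.prod, map_list_prod, List.map_map]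
  rfl

/-- `p * ofList s = w.prod` with `s` a suffix: `p` is the head times the complementary prefix. -/
def prefixProds (w : NormalWord d) : Set (PushoutI φ) :=
  {p | ∃ s, s <:+ w.toList ∧ p * ofList s = w.prod}

def prefixCosets (w : NormalWord d) : Set (PushoutI φ) :=
  w.prefixProds * Set.range (base φ)

theorem base_head_mem_prefixProds (w : NormalWord d) : base φ w.head ∈ w.prefixProds :=
  ⟨w.toList, List.suffix_refl _, (prod_eq_base_mul_ofList w).symm⟩

theorem range_base_subset_prefixCosets (w : NormalWord d) :
    Set.range (base φ) ⊆ w.prefixCosets := by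
  rintro _ ⟨a, rfl⟩
  exact ⟨_, w.base_head_mem_prefixProds, base φ (w.head⁻¹ * a), ⟨_, rfl⟩, by simp⟩

theorem prefixProds_finite (w : NormalWord d) : w.prefixProds.Finite := by
  refine ((List.finite_toSet w.toList.tails).image fun s => w.prod * (ofList s)⁻¹).subset ?_
  rintro p ⟨s, hs, hp⟩
  exact ⟨s, (List.mem_tails _ _).2 hs, (eq_mul_inv_of_mul_eq hp).symm⟩

theorem prefixCosets_finite [Finite A] (w : NormalWord d) : w.prefixCosets.Finite :=
  w.prefixProds_finite.mul (Set.finite_range _)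

theorem prefixProds_base_smul (a : A) (w : NormalWord d) :
    (a • w).prefixProds = base φ a • w.prefixProds := by
  ext p
  simp only [Set.mem_smul_set_iff_inv_smul_mem, prefixProds, Set.mem_ofPred_eq, smul_eq_mul,
    prod_base_smul, mul_assoc, inv_mul_eq_iff_eq_mul]
  rfl

theorem prefixCosets_base_smul (a : A) (w : NormalWord d) :
    (a • w).prefixCosets = base φ a • w.prefixCosets := by
  rw [prefixCosets, prefixCosets, prefixProds_base_smul, smul_mul_assoc]

theorem of_smul_prefixProds_subset_cons {i : ι} (g : G i) (w : NormalWord d)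
    (hmw : w.fstIdx ≠ some i) (hgr : g ∉ (φ i).range) :
    of (φ := φ) i g • w.prefixProds ⊆ (cons g w hmw hgr).prefixProds := by
  rintro _ ⟨p, ⟨s, hs, hp⟩, rfl⟩
  exact ⟨s, hs.trans (List.suffix_cons _ _), by rw [prod_cons, ← hp, ← mul_assoc]; rfl⟩

theorem of_smul_prefixCosets_subset_cons {i : ι} (g : G i) (w : NormalWord d)
    (hmw : w.fstIdx ≠ some i) (hgr : g ∉ (φ i).range) :
    of (φ := φ) i g • w.prefixCosets ⊆ (cons g w hmw hgr).prefixCosets := by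
  rw [prefixCosets, ← smul_mul_assoc]
  exact Set.mul_subset_mul_right (of_smul_prefixProds_subset_cons g w hmw hgr)

variable [DecidableEq ι] [∀ i, DecidableEq (G i)]

theorem toList_smul_tail_suffix {i : ι} (g : G i) (w : NormalWord d) :
    (g • w).toList.tail <:+ w.toList := by
  rw [summand_smul_def']
  refine (CoprodI.Word.rcons_toList_tail_suffix _).trans ?_
  show (CoprodI.Word.equivPair i (CoprodI.of (φ i w.head) • w.toWord)).tail.toList <:+ _
  rw [CoprodI.Word.equivPair_smul_same]
  exact CoprodI.Word.equivPair_tail_toList_suffix _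

theorem prefixProds_smul_subset {i : ι} (g : G i) (w : NormalWord d) :
    (g • w).prefixProds ⊆ Set.range (base φ) ∪ of (φ := φ) i g • w.prefixProds := by
  rintro p ⟨s, hs, hp⟩
  obtain rfl | hs' : s = (g • w).toList ∨ s <:+ (g • w).toList.tail := by
    rcases hl : (g • w).toList with _ | ⟨x, l⟩
    · exact Or.inl (List.eq_nil_of_suffix_nil (hl ▸ hs))
    · exact List.suffix_cons_iff.1 (hl ▸ hs)
  · rw [prod_eq_base_mul_ofList, mul_left_inj] at hp
    exact Or.inl ⟨_, hp.symm⟩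
  · refine Or.inr (Set.mem_smul_set_iff_inv_smul_mem.2
      ⟨s, hs'.trans (toList_smul_tail_suffix g w), ?_⟩)
    rw [smul_eq_mul, mul_assoc, hp, prod_summand_smul, inv_mul_cancel_left]

theorem prefixCosets_smul_subset {i : ι} (g : G i) (w : NormalWord d) :
    (g • w).prefixCosets ⊆ Set.range (base φ) ∪ of (φ := φ) i g • w.prefixCosets := by
  calc (g • w).prefixCosets
      ⊆ (Set.range (base φ) ∪ of (φ := φ) i g • w.prefixProds) * Set.range (base φ) :=
        Set.mul_subset_mul_right (prefixProds_smul_subset g w)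
    _ = Set.range (base φ) ∪ of (φ := φ) i g • w.prefixCosets := by
        rw [Set.union_mul, ← MonoidHom.coe_range, coe_mul_coe, MonoidHom.coe_range, prefixCosets,
          smul_mul_assoc]

theorem prefixCosets_prod_smul_subset (w v : NormalWord d) :
    (w.prod • v).prefixCosets ⊆ w.prefixCosets ∪ w.prod • v.prefixCosets := by
  induction w using consRecOn generalizing v with
  | empty => simp
  | cons i g w hmw _ hgr _ ih =>
    rw [prod_cons, mul_smul, of_smul_eq_smul]
    refine (prefixCosets_smul_subset g _).trans ?_
    refine Set.union_subset ((range_base_subset_prefixCosets _).trans Set.subset_union_left) ?_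
    calc of i g • (w.prod • v).prefixCosets
        ⊆ of i g • w.prefixCosets ∪ (of i g * w.prod) • v.prefixCosets := by
          rw [← smul_smul, ← Set.smul_set_union]
          exact Set.smul_set_mono (ih v)
      _ ⊆ _ := Set.union_subset_union_left _ (of_smul_prefixCosets_subset_cons g w hmw hgr)
  | base a w _ ih =>
    rw [base_smul_eq_smul, prod_base_smul, mul_smul, base_smul_eq_smul, prefixCosets_base_smul,
      prefixCosets_base_smul, mul_smul, ← Set.smul_set_union]
    exact Set.smul_set_mono (ih v)

end NormalWord

variable [DecidableEq ι] [∀ i, DecidableEq (G i)] (d : Transversal φ)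

theorem prefixCosets_equiv_mul_subset (x y : PushoutI φ) :
    (equiv (x * y) : NormalWord d).prefixCosets ⊆
      (equiv x : NormalWord d).prefixCosets ∪ x • (equiv y : NormalWord d).prefixCosets := by
  have hx : (equiv x : NormalWord d).prod = x := equiv.symm_apply_apply x
  have hxy : (equiv (x * y) : NormalWord d) = x • equiv y := mul_smul x y _
  simpa only [hx, hxy] using prefixCosets_prod_smul_subset (equiv x : NormalWord d) (equiv y)

def IsQuasiconvexWith (M : Subgroup (PushoutI φ)) (F : Set (PushoutI φ)) : Prop :=
  ∀ m ∈ M, (equiv m : NormalWord d).prefixCosets ⊆ (M : Set (PushoutI φ)) * F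

theorem exists_isQuasiconvexWith_of_fg [Finite A] {M : Subgroup (PushoutI φ)} (hM : M.FG) :
    ∃ F : Set (PushoutI φ), F.Finite ∧ IsQuasiconvexWith d M F := by
  obtain ⟨S, hSM, hS⟩ := (Subgroup.fg_iff M).1 hM
  let F := ⋃ x ∈ insert 1 (S ∪ S⁻¹), (equiv x : NormalWord d).prefixCosets
  have hF : ∀ x ∈ insert 1 (S ∪ S⁻¹),
      (equiv x : NormalWord d).prefixCosets ⊆ (M : Set _) * F := fun x hx =>
    (Set.subset_biUnion_of_mem (u := fun x => (equiv x : NormalWord d).prefixCosets) hx).trans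
      (Set.subset_mul_right _ M.one_mem)
  refine ⟨F, ((hS.union hS.inv).insert 1).biUnion fun x _ => prefixCosets_finite _, ?_⟩
  intro m hm
  rw [← hSM] at hm
  induction hm using Subgroup.closure_induction'' with
  | mem x hx => exact hF x (by simp [hx])
  | inv_mem x hx => exact hF x⁻¹ (by simp [hx])
  | one => exact hF 1 (Set.mem_insert _ _)
  | mul x y hx _ ihx ihy =>
    rw [hSM] at hx
    refine (prefixCosets_equiv_mul_subset d x y).trans (Set.union_subset ihx ?_)
    calc x • (equiv y : NormalWord d).prefixCosets
        ⊆ x • ((M : Set _) * F) := Set.smul_set_mono ihy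
      _ = (M : Set _) * F := by rw [← smul_mul_assoc, smul_coe_set hx]

theorem fg_of_isQuasiconvexWith [Finite ι] [∀ i, Finite (G i)] [Finite A]
    {M : Subgroup (PushoutI φ)} {F : Set (PushoutI φ)} (hF : F.Finite)
    (hM : IsQuasiconvexWith d M F) : M.FG := by
  let S := Set.range (base φ) ∪ ⋃ i, Set.range (of (φ := φ) i)
  have hS : S.Finite := (Set.finite_range _).union (Set.finite_iUnion fun _ => Set.finite_range _)
  let F' := insert 1 F
  have hF' : F'.Finite := hF.insert 1
  refine (Subgroup.fg_iff M).2 ⟨(M : Set _) ∩ (S * F'⁻¹ ∪ F' * S * F'⁻¹),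
    le_antisymm ((Subgroup.closure_le _).2 Set.inter_subset_left) fun m hm => ?_,
    ((hS.mul hF'.inv).union ((hF'.mul hS).mul hF'.inv)).inter_of_right _⟩
  let w : NormalWord d := equiv m
  let p : ℕ → PushoutI φ := fun k => base φ w.head * ofList (w.toList.take k)
  have hp : ∀ k, p k ∈ w.prefixProds := fun k => ⟨w.toList.drop k, List.drop_suffix _ _, by
    rw [mul_assoc, ← ofList_append, List.take_append_drop, ← prod_eq_base_mul_ofList]⟩
  refine Subgroup.mem_closure_of_chain (p := p) (fun k => ?_) (Or.inl ⟨w.head, by simp [p]⟩)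
    (fun k => ?_) w.toList.length hm (Set.mem_insert 1 F) ?_
  · exact Set.mul_subset_mul_left (Set.subset_insert 1 F)
      (hM m hm ⟨p k, hp k, 1, ⟨1, map_one _⟩, mul_one _⟩)
  · have : (p k)⁻¹ * p (k + 1) = ofList w.toList[k]?.toList := by
      simp [p, List.take_add_one, mul_assoc]
    rw [this]
    rcases w.toList[k]? with _ | x
    · exact Or.inl ⟨1, map_one _⟩
    · exact Or.inr (Set.mem_iUnion.2 ⟨x.1, x.2, by simp [ofList]⟩)
  · show base φ w.head * ofList (w.toList.take w.toList.length) = m * 1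
    rw [mul_one, List.take_length, ← prod_eq_base_mul_ofList]
    exact equiv.symm_apply_apply m

end Monoid.PushoutI

/-- **Howson property for amalgams of finite groups.**
If `G = G₁ *_A G₂` is an amalgamated free product (pushout) of finite groups `G₁, G₂`
along injective homomorphisms `φ i : A →* G i`, then the intersection of two finitely
generated subgroups of `G` is finitely generated. -/
theorem howson_property_amalgam_of_finite
    (A : Type) [Group A] (Gf : Bool → Type) [∀ i, Group (Gf i)] [∀ i, Finite (Gf i)]
    (φ : ∀ i : Bool, A →* Gf i) (hφ : ∀ i, Function.Injective (φ i))
    (H K : Subgroup (PushoutI φ)) (hH : H.FG) (hK : K.FG) :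
    (H ⊓ K).FG := by
  classical
  have : Finite A := Finite.of_injective (φ true) (hφ true)
  obtain ⟨d⟩ := transversal_nonempty φ hφ
  obtain ⟨F₁, hF₁, hqH⟩ := exists_isQuasiconvexWith_of_fg d hH
  obtain ⟨F₂, hF₂, hqK⟩ := exists_isQuasiconvexWith_of_fg d hK
  obtain ⟨F, hF, hHK⟩ := H.exists_finite_inter_mul_subset K hF₁ hF₂
  exact fg_of_isQuasiconvexWith d hF fun m hm =>
    (Set.subset_inter (hqH m hm.1) (hqK m hm.2)).trans hHK
end

section
/- Assume that φ₂ is not surjective, i.e. ι_A(A) is a proper subgroup of ι₂(G₂). If H is a nontrivial subgroup of G contained in ι₁(G₁) and H is normal in G, then H is contained in ι_A(A). -/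
open Monoid

/-- If `ι_A(A)` is a proper subgroup of `ι₂(G₂)` (i.e. `φ₂` is not surjective), then
every nontrivial normal subgroup of the amalgam `G = G₁ *_A G₂` that is contained in
`ι₁(G₁)` is contained in `ι_A(A)`. -/
theorem normal_subgroup_of_factor_le_base
    (A : Type) [Group A] (Gf : Bool → Type) [∀ i, Group (Gf i)] [∀ i, Finite (Gf i)]
    (φ : ∀ i : Bool, A →* Gf i) (hφ : ∀ i, Function.Injective (φ i))
    (hproper : (PushoutI.base φ).range < (PushoutI.of (φ := φ) false).range)
    (H : Subgroup (PushoutI φ)) (hne : H ≠ ⊥)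
    (hle : H ≤ (PushoutI.of (φ := φ) true).range) (hnormal : H.Normal) :
    H ≤ (PushoutI.base φ).range := by
  classical
  intro x hx
  by_contra hxb
  -- x = of true g with g not in range of φ true
  obtain ⟨g, hg⟩ := hle hx
  have hgr : g ∉ (φ true).range := by
    rintro ⟨a, rfl⟩
    exact hxb (hg ▸ (PushoutI.of_apply_eq_base φ true a ▸ ⟨a, rfl⟩))
  have hg1 : g ≠ 1 := by
    rintro rfl
    exact hxb (by rw [← hg, map_one]; exact one_mem _)
  -- pick t ∈ G₂ whose image is not in base range
  obtain ⟨y, hy, hyb⟩ := SetLike.exists_of_lt hproper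
  obtain ⟨t, rfl⟩ := hy
  have htr : t ∉ (φ false).range := by
    rintro ⟨a, rfl⟩
    exact hyb (PushoutI.of_apply_eq_base φ false a ▸ ⟨a, rfl⟩)
  have ht1 : t ≠ 1 := by rintro rfl; exact hyb (by rw [map_one]; exact one_mem _)
  -- conjugate
  have hconj : PushoutI.of (φ := φ) false t * x * (PushoutI.of (φ := φ) false t)⁻¹ ∈ H :=
    hnormal.conj_mem x hx _
  obtain ⟨g', hg'⟩ := hle hconj
  have hg'r : g' ∉ (φ true).range := by
    rintro ⟨a, rfl⟩
    have hbase : PushoutI.of (φ := φ) false t * x * (PushoutI.of (φ := φ) false t)⁻¹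
        ∈ (PushoutI.base φ).range := by
      rw [← hg', PushoutI.of_apply_eq_base φ true a]; exact ⟨a, rfl⟩
    have hxfalse : x ∈ (PushoutI.of (φ := φ) false).range := by
      have hmem : PushoutI.of (φ := φ) false t * x * (PushoutI.of (φ := φ) false t)⁻¹
          ∈ (PushoutI.of (φ := φ) false).range := le_of_lt hproper hbase
      have htm : PushoutI.of (φ := φ) false t ∈ (PushoutI.of (φ := φ) false).range :=
        MonoidHom.mem_range.2 ⟨t, rfl⟩
      have := mul_mem (mul_mem (inv_mem htm) hmem) htm
      simpa [mul_assoc] using this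
    have : x ∈ (PushoutI.of (φ := φ) true).range ⊓ (PushoutI.of (φ := φ) false).range :=
      ⟨hle hx, hxfalse⟩
    rw [PushoutI.inf_of_range_eq_base_range hφ (by simp)] at this
    exact hxb this
  have hg'1 : g' ≠ 1 := by
    rintro rfl
    apply hg'r
    exact ⟨1, by simp⟩
  -- build a reduced word whose product is 1
  let w : Monoid.CoprodI.Word Gf :=
    ⟨[⟨false, t⟩, ⟨true, g⟩, ⟨false, t⁻¹⟩, ⟨true, g'⁻¹⟩],
      by simp_all, by simp [List.isChain_cons_cons]⟩
  have hw : PushoutI.Reduced φ w := by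
    intro l hl
    simp only [w, List.mem_cons, List.not_mem_nil, or_false] at hl
    rcases hl with rfl | rfl | rfl | rfl
    · exact htr
    · exact hgr
    · simpa using htr
    · simpa using hg'r
  have hprod : PushoutI.ofCoprodI (φ := φ) w.prod = 1 := by
    simp only [w, Monoid.CoprodI.Word.prod, List.map_cons, List.prod_cons, List.prod_nil,
      List.map_nil, map_mul, PushoutI.ofCoprodI_of, map_inv, mul_one]
    simp only [hg, hg']
    group
  have := hw.eq_empty_of_mem_range hφ (hprod ▸ one_mem _)
  simp [w, Monoid.CoprodI.Word.empty] at this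
end

section
/- Let B be a subgroup of A and let H = ι_A(B) be the corresponding subgroup of G. Then H is normal in G if and only if φ₁(B) is a normal subgroup of G₁ and φ₂(B) is a normal subgroup of G₂. -/
open Monoid

namespace Monoid.PushoutI

open Subgroup

variable {ι : Type*} {G : ι → Type*} {H : Type*} [∀ i, Group (G i)] [Group H]
  {φ : ∀ i, H →* G i}

theorem map_map_of_eq_map_base (K : Subgroup H) (i : ι) :
    (K.map (φ i)).map (of i) = K.map (base φ) := by
  rw [map_map, of_comp_eq_base]

theorem iSup_range_of_eq_top [Nonempty ι] : ⨆ i, (of (φ := φ) i).range = ⊤ := by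
  refine eq_top_iff' _ |>.2 fun g => ?_
  induction g using induction_on with
  | of i g => exact mem_iSup_of_mem i ⟨g, rfl⟩
  | base h =>
    obtain ⟨i⟩ := ‹Nonempty ι›
    exact mem_iSup_of_mem i ⟨φ i h, of_apply_eq_base φ i h⟩
  | mul x y hx hy => exact mul_mem hx hy

theorem normal_map_of_normal_map_base (hφ : ∀ i, Function.Injective (φ i)) {K : Subgroup H}
    (hK : (K.map (base φ)).Normal) (i : ι) : (K.map (φ i)).Normal := by
  rw [← comap_map_eq_self_of_injective (of_injective hφ i) (K.map (φ i)),
    map_map_of_eq_map_base]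
  exact hK.comap _

theorem normal_map_base_of_forall_normal_map [Nonempty ι] {K : Subgroup H}
    (hK : ∀ i, (K.map (φ i)).Normal) : (K.map (base φ)).Normal := by
  rw [← normalizer_eq_top_iff, eq_top_iff, ← iSup_range_of_eq_top, iSup_le_iff]
  intro i
  rw [← map_map_of_eq_map_base K i, MonoidHom.range_eq_map, ← normalizer_eq_top_iff.2 (hK i)]
  exact le_normalizer_map _

theorem normal_map_base_iff [Nonempty ι] (hφ : ∀ i, Function.Injective (φ i))
    (K : Subgroup H) : (K.map (base φ)).Normal ↔ ∀ i, (K.map (φ i)).Normal :=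
  ⟨normal_map_of_normal_map_base hφ, normal_map_base_of_forall_normal_map⟩

end Monoid.PushoutI

theorem base_subgroup_normal_iff_general
    (A : Type) [Group A] (Gf : Bool → Type) [∀ i, Group (Gf i)]
    (φ : ∀ i : Bool, A →* Gf i) (hφ : ∀ i, Function.Injective (φ i))
    (B : Subgroup A) :
    (B.map (PushoutI.base φ)).Normal ↔
      (B.map (φ true)).Normal ∧ (B.map (φ false)).Normal := by
  rw [PushoutI.normal_map_base_iff hφ, Bool.forall_bool, and_comm]

/-- Let `B ≤ A` and let `H = ι_A(B)` be the corresponding subgroup of the amalgam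
`G = G₁ *_A G₂` of finite groups. Then `H` is normal in `G` if and only if `φ₁(B)` is
normal in `G₁` and `φ₂(B)` is normal in `G₂`. -/
theorem base_subgroup_normal_iff
    (A : Type) [Group A] (Gf : Bool → Type) [∀ i, Group (Gf i)] [∀ i, Finite (Gf i)]
    (φ : ∀ i : Bool, A →* Gf i) (hφ : ∀ i, Function.Injective (φ i))
    (B : Subgroup A) :
    (B.map (PushoutI.base φ)).Normal ↔
      (B.map (φ true)).Normal ∧ (B.map (φ false)).Normal :=
  base_subgroup_normal_iff_general A Gf φ hφ B
end

section
/- If h ∈ ι₁(G₁) \ ι_A(A) and g ∈ ι₂(G₂) \ ι_A(A), then the conjugate g·h·g⁻¹ lies neither in ι₁(G₁) nor in ι₂(G₂). -/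
open Monoid

open Monoid.PushoutI in
private lemma aux_reduced_word
    (A : Type) [Group A] (Gf : Bool → Type) [∀ i, Group (Gf i)]
    (φ : ∀ i : Bool, A →* Gf i) (hφ : ∀ i, Function.Injective (φ i))
    (g₁ : Gf false) (h₁ k : Gf true)
    (hg₁ : g₁ ∉ (φ false).range) (hh₁ : h₁ ∉ (φ true).range) (hk : k ∉ (φ true).range)
    (heq : of (φ := φ) false g₁ * of true h₁ * (of (φ := φ) false g₁)⁻¹ = of (φ := φ) true k) :
    False := by
  classical
  have hg1 : g₁ ≠ 1 := fun h => hg₁ (h ▸ one_mem _)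
  have hh1 : h₁ ≠ 1 := fun h => hh₁ (h ▸ one_mem _)
  have hk1 : k⁻¹ ≠ 1 := fun h => hk (by simpa using (inv_eq_one.mp h ▸ one_mem (φ true).range))
  let w : Monoid.CoprodI.Word Gf :=
    ⟨[⟨false, g₁⟩, ⟨true, h₁⟩, ⟨false, g₁⁻¹⟩, ⟨true, k⁻¹⟩],
      by simp_all, by simp⟩
  have hw : Reduced φ w := by
    intro x hx
    simp only [w, List.mem_cons, List.mem_singleton, List.not_mem_nil, or_false] at hx
    rcases hx with rfl | rfl | rfl | rfl
    · exact hg₁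
    · exact hh₁
    · simpa using hg₁
    · simpa using hk
  have hmem : ofCoprodI (w.prod) ∈ (base φ).range := by
    simp only [w, Monoid.CoprodI.Word.prod, List.map_cons, List.prod_cons, List.prod_nil,
      List.map_nil, map_mul, ofCoprodI_of, mul_one]
    have : of (φ := φ) false g₁ * of true h₁ * (of (φ := φ) false g₁⁻¹ * of (φ := φ) true k⁻¹)
        = 1 := by
      rw [map_inv, map_inv, ← mul_assoc, heq, mul_inv_cancel]
    rw [← mul_assoc, this]
    exact one_mem _
  have := hw.eq_empty_of_mem_range hφ hmem
  simp [w, Monoid.CoprodI.Word.empty] at this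

/-- In the amalgam `G = G₁ *_A G₂` of finite groups, if `h ∈ ι₁(G₁) \ ι_A(A)` and
`g ∈ ι₂(G₂) \ ι_A(A)`, then the conjugate `g·h·g⁻¹` lies neither in `ι₁(G₁)` nor in
`ι₂(G₂)`. -/
theorem conj_not_mem_factors
    (A : Type) [Group A] (Gf : Bool → Type) [∀ i, Group (Gf i)] [∀ i, Finite (Gf i)]
    (φ : ∀ i : Bool, A →* Gf i) (hφ : ∀ i, Function.Injective (φ i))
    (h g : PushoutI φ)
    (hh : h ∈ (PushoutI.of (φ := φ) true).range ∧ h ∉ (PushoutI.base φ).range)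
    (hg : g ∈ (PushoutI.of (φ := φ) false).range ∧ g ∉ (PushoutI.base φ).range) :
    g * h * g⁻¹ ∉ (PushoutI.of (φ := φ) true).range ∧
      g * h * g⁻¹ ∉ (PushoutI.of (φ := φ) false).range := by
  classical
  obtain ⟨⟨h₁, rfl⟩, hhb⟩ := hh
  obtain ⟨⟨g₁, rfl⟩, hgb⟩ := hg
  have hh₁ : h₁ ∉ (φ true).range := by
    rintro ⟨a, rfl⟩
    exact hhb (PushoutI.of_apply_eq_base φ true a ▸ ⟨a, rfl⟩)
  have hg₁ : g₁ ∉ (φ false).range := by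
    rintro ⟨a, rfl⟩
    exact hgb (PushoutI.of_apply_eq_base φ false a ▸ ⟨a, rfl⟩)
  constructor
  · rintro ⟨k, hk⟩
    have hk' : k ∉ (φ true).range := by
      rintro ⟨a, rfl⟩
      -- then g h g⁻¹ ∈ base range, so h ∈ (of false).range, so h ∈ base range
      have hb : PushoutI.of (φ := φ) false g₁ * PushoutI.of true h₁ *
          (PushoutI.of (φ := φ) false g₁)⁻¹ ∈ (PushoutI.base φ).range := by
        rw [← hk, PushoutI.of_apply_eq_base]; exact ⟨a, rfl⟩
      have hfr : PushoutI.of (φ := φ) true h₁ ∈ (PushoutI.of (φ := φ) false).range := by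
        have h2 : PushoutI.of (φ := φ) false g₁ * PushoutI.of true h₁ *
            (PushoutI.of (φ := φ) false g₁)⁻¹ ∈ (PushoutI.of (φ := φ) false).range := by
          obtain ⟨a, ha⟩ := hb
          exact ⟨φ false a, by rw [PushoutI.of_apply_eq_base, ha]⟩
        have := mul_mem (mul_mem (inv_mem (MonoidHom.mem_range.2 ⟨g₁, rfl⟩ :
            PushoutI.of (φ := φ) false g₁ ∈ (PushoutI.of (φ := φ) false).range)) h2)
          (MonoidHom.mem_range.2 ⟨g₁, rfl⟩)
        simpa [mul_assoc] using this
      refine hhb ?_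
      rw [← PushoutI.inf_of_range_eq_base_range hφ (Bool.noConfusion : true ≠ false)]
      exact ⟨⟨h₁, rfl⟩, hfr⟩
    exact aux_reduced_word A Gf φ hφ g₁ h₁ k hg₁ hh₁ hk' hk.symm
  · rintro ⟨k, hk⟩
    -- of false g₁ * of true h₁ * (of false g₁)⁻¹ = of false k → h ∈ (of false).range
    have hfr : PushoutI.of (φ := φ) true h₁ ∈ (PushoutI.of (φ := φ) false).range :=
      ⟨g₁⁻¹ * k * g₁, by rw [map_mul, map_mul, map_inv, hk]; group⟩
    have : PushoutI.of (φ := φ) true h₁ ∈ (PushoutI.base φ).range := by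
      rw [← PushoutI.inf_of_range_eq_base_range hφ (Bool.noConfusion : true ≠ false)]
      exact ⟨⟨h₁, rfl⟩, hfr⟩
    exact hhb this
end

section
/- Let H be a nontrivial finitely generated normal subgroup of G such that H is not contained in ι₁(G₁) and not contained in ι₂(G₂). Then every right coset of H in G is essential. -/
/-!
Write elements of `G₁ *_A G₂` as reduced words: letters outside `A`, taken alternately from the two
factors. Since `H` is normal and lies in neither factor, conjugating, inverting and concatenating
elements of `H` yields, for each factor, arbitrarily long reduced words in `H` starting in that
factor. If `c` lies in a factor, `H c` is reached at the first letter of such a word. If `c` is the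
product of a reduced word `C`, take such a word `W` starting in the factor opposite to the last
letter of `C`. Right multiplication of a reduced word by `c⁻¹` only changes its last `|C| + 1`
letters, so the reduced form of `c W c⁻¹ ∈ H` begins with `C` followed by a letter of `W`, and
`H c` is the coset of that prefix.
-/

open Monoid

section EssentialCosets

variable {A : Type} [Group A] {Gf : Bool → Type} [∀ i, Group (Gf i)]
  (φ : ∀ i : Bool, A →* Gf i)

/-- `g` lies in the image `ι_i(G_i)` of the `i`-th factor of the pushout. -/
def InFactor (i : Bool) (g : PushoutI φ) : Prop :=
  g ∈ (PushoutI.of (φ := φ) i).range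

/-- `L = (g₁, …, g_n)` is a normal decomposition of `g ∈ G = G₁ *_A G₂`: it is a nonempty
sequence with product `g`, each entry is a nontrivial element of `ι₁(G₁) ∪ ι₂(G₂)`,
consecutive entries do not lie in the same factor, and if `n > 1` then no entry lies in
`ι_A(A)`. -/
def IsNormalDecomp (g : PushoutI φ) (L : List (PushoutI φ)) : Prop :=
  L ≠ [] ∧ L.prod = g ∧
    (∀ x ∈ L, x ≠ 1 ∧ (InFactor φ true x ∨ InFactor φ false x)) ∧
    (∀ n : ℕ, ∀ x y : PushoutI φ, L[n]? = some x → L[n + 1]? = some y →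
      ¬ (InFactor φ true x ∧ InFactor φ true y) ∧
      ¬ (InFactor φ false x ∧ InFactor φ false y)) ∧
    (1 < L.length → ∀ x ∈ L, x ∉ (PushoutI.base φ).range)

/-- The right coset `H·c` is *essential* if either `H·c = H`, or there is `h ∈ H` with a
normal decomposition `(h₁, …, h_n)`, an index `0 ≤ m < n`, and an element `s` of a factor
`ι_i(G_i)` containing `h_{m+1}`, such that `H·c = H·h₁⋯h_m·s`. -/
def IsEssentialCoset (H : Subgroup (PushoutI φ)) (c : PushoutI φ) : Prop :=
  c ∈ H ∨ ∃ (L : List (PushoutI φ)) (m : ℕ) (s : PushoutI φ),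
    IsNormalDecomp φ L.prod L ∧ L.prod ∈ H ∧ m < L.length ∧
    (∃ (i : Bool) (x : PushoutI φ), L[m]? = some x ∧ InFactor φ i x ∧ InFactor φ i s) ∧
    c * ((L.take m).prod * s)⁻¹ ∈ H

/-- The collection of essential right cosets `H·c` of `H` in `G`, as a set of subsets of `G`. -/
def essentialCosets (H : Subgroup (PushoutI φ)) : Set (Set (PushoutI φ)) :=
  {S | ∃ c : PushoutI φ, IsEssentialCoset φ H c ∧ S = {g : PushoutI φ | g * c⁻¹ ∈ H}}

end EssentialCosets

namespace Monoid.PushoutI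

section Words

variable {ι : Type*} {G : ι → Type*} [∀ i, Group (G i)] {A : Type*} [Group A]
  {φ : ∀ i, A →* G i}

variable (φ) in
def wordProd (L : List (Σ i, G i)) : PushoutI φ :=
  (L.map fun p => of p.1 p.2).prod

variable (φ) in
def IsReducedWord (L : List (Σ i, G i)) : Prop :=
  (∀ p ∈ L, p.2 ∉ (φ p.1).range) ∧ (L.map Sigma.fst).IsChain (· ≠ ·)

def invWord (L : List (Σ i, G i)) : List (Σ i, G i) :=
  (L.map fun p => ⟨p.1, p.2⁻¹⟩).reverse

@[simp]
theorem wordProd_nil : wordProd φ [] = 1 := rfl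

@[simp]
theorem wordProd_cons (p : Σ i, G i) (L : List (Σ i, G i)) :
    wordProd φ (p :: L) = of p.1 p.2 * wordProd φ L :=
  List.prod_cons

@[simp]
theorem wordProd_append (L M : List (Σ i, G i)) :
    wordProd φ (L ++ M) = wordProd φ L * wordProd φ M := by
  simp [wordProd]

@[simp]
theorem length_invWord (L : List (Σ i, G i)) : (invWord L).length = L.length := by
  simp [invWord]

theorem wordProd_invWord (L : List (Σ i, G i)) : wordProd φ (invWord L) = (wordProd φ L)⁻¹ := by
  induction L with
  | nil => rfl
  | cons p L ih =>
    have : invWord (p :: L) = invWord L ++ [⟨p.1, p.2⁻¹⟩] := by simp [invWord]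
    simp [this, ih]

theorem map_fst_invWord (L : List (Σ i, G i)) :
    (invWord L).map Sigma.fst = (L.map Sigma.fst).reverse := by
  simp [invWord, List.map_reverse, Function.comp_def]

theorem IsReducedWord.invWord {L : List (Σ i, G i)} (hL : IsReducedWord φ L) :
    IsReducedWord φ (invWord L) := by
  refine ⟨?_, ?_⟩
  · intro p hp
    obtain ⟨q, hq, rfl⟩ := List.mem_map.1 (List.mem_reverse.1 hp)
    exact inv_mem_iff.not.2 (hL.1 q hq)
  · rw [map_fst_invWord, List.isChain_reverse]
    exact hL.2.imp fun _ _ h => h.symm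

theorem isReducedWord_append {L M : List (Σ i, G i)} :
    IsReducedWord φ (L ++ M) ↔ IsReducedWord φ L ∧ IsReducedWord φ M ∧
      ∀ i ∈ (L.map Sigma.fst).getLast?, ∀ j ∈ (M.map Sigma.fst).head?, i ≠ j := by
  simp only [IsReducedWord, List.forall_mem_append, List.map_append, List.isChain_append]
  tauto

@[simp]
theorem isReducedWord_singleton {p : Σ i, G i} : IsReducedWord φ [p] ↔ p.2 ∉ (φ p.1).range := by
  simp [IsReducedWord]

@[simp]
theorem isReducedWord_cons_cons {p q : Σ i, G i} {L : List (Σ i, G i)} :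
    IsReducedWord φ (p :: q :: L) ↔
      p.2 ∉ (φ p.1).range ∧ p.1 ≠ q.1 ∧ IsReducedWord φ (q :: L) := by
  simp only [IsReducedWord, List.forall_mem_cons, List.map_cons, List.isChain_cons_cons]
  tauto

theorem of_mem_range_base_iff (hφ : ∀ i, Function.Injective (φ i)) {i : ι} {g : G i} :
    of i g ∈ (base φ).range ↔ g ∈ (φ i).range := by
  refine ⟨fun ⟨a, ha⟩ => ⟨a, of_injective hφ i ?_⟩, fun ⟨a, ha⟩ => ⟨a, ?_⟩⟩
  · rw [of_apply_eq_base, ha]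
  · rw [← ha, of_apply_eq_base]

theorem exists_eq_base_mul_wordProd (hφ : ∀ i, Function.Injective (φ i)) (g : PushoutI φ) :
    ∃ a L, IsReducedWord φ L ∧ g = base φ a * wordProd φ L := by
  classical
  obtain ⟨d⟩ := NormalWord.transversal_nonempty φ hφ
  set w : NormalWord d := NormalWord.equiv g
  refine ⟨w.head, w.toList, ⟨fun p hp ⟨a, ha⟩ => w.ne_one p hp ?_, ?_⟩, ?_⟩
  · -- a letter of `w` lies both in `φ p.1` and in the transversal, hence is `1`
    have := (d.compl p.1).1 (a₁ := (⟨p.2, a, ha⟩, ⟨1, d.one_mem _⟩))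
      (a₂ := (⟨1, one_mem _⟩, ⟨p.2, w.normalized p.1 p.2 hp⟩)) (by simp)
    exact (congrArg (fun x => x.2.1) this).symm
  · exact (List.isChain_map _).2 w.chain_ne
  · conv_lhs => rw [← (NormalWord.equiv (d := d)).symm_apply_apply g]
    simp [NormalWord.equiv, NormalWord.prod, CoprodI.Word.prod, wordProd, map_list_prod,
      Function.comp_def, w]

theorem mem_range_base_or_exists_isReducedWord (hφ : ∀ i, Function.Injective (φ i))
    (g : PushoutI φ) :
    g ∈ (base φ).range ∨ ∃ L ≠ [], IsReducedWord φ L ∧ wordProd φ L = g := by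
  obtain ⟨a, L, hL, rfl⟩ := exists_eq_base_mul_wordProd hφ g
  match L, hL with
  | [], _ => exact Or.inl ⟨a, by simp⟩
  | p :: L, ⟨hp, hchain⟩ =>
    refine Or.inr ⟨⟨p.1, φ p.1 a * p.2⟩ :: L, List.cons_ne_nil _ _, ⟨?_, hchain⟩, ?_⟩
    · rw [List.forall_mem_cons] at hp ⊢
      exact ⟨(Subgroup.mul_mem_cancel_left _ (MonoidHom.mem_range.2 ⟨a, rfl⟩)).not.2 hp.1, hp.2⟩
    · simp [← of_apply_eq_base φ p.1, mul_assoc]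

theorem exists_isReducedWord_eq_pair_mul_of {a b : Σ i, G i} (hab : IsReducedWord φ [a, b])
    (v : Σ i, G i) :
    ∃ P, IsReducedWord φ P ∧ (P.map Sigma.fst).head? = some a.1 ∧
      wordProd φ P = of a.1 a.2 * of b.1 b.2 * of v.1 v.2 := by
  classical
  obtain ⟨i, x⟩ := a
  obtain ⟨j, y⟩ := b
  obtain ⟨k, z⟩ := v
  simp only [isReducedWord_cons_cons, isReducedWord_singleton] at hab
  obtain ⟨hx, hij, hy⟩ := hab
  have : (k ≠ j ∧ z ∉ (φ k).range) ∨ ∃ g : G j, of k z = of (φ := φ) j g := by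
    by_cases hz : z ∈ (φ k).range
    · obtain ⟨t, rfl⟩ := hz
      exact Or.inr ⟨φ j t, by rw [of_apply_eq_base, of_apply_eq_base]⟩
    · by_cases hkj : k = j
      · subst hkj
        exact Or.inr ⟨z, rfl⟩
      · exact Or.inl ⟨hkj, hz⟩
  rcases this with ⟨hkj, hz⟩ | ⟨g, hg⟩
  · exact ⟨[⟨i, x⟩, ⟨j, y⟩, ⟨k, z⟩], by simp [*, Ne.symm hkj], rfl, by simp [mul_assoc]⟩
  rw [hg, mul_assoc, ← map_mul]
  by_cases hyg : y * g ∈ (φ j).range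
  · obtain ⟨t, ht⟩ := hyg
    refine ⟨[⟨i, x * φ i t⟩], ?_, rfl, ?_⟩
    · simpa using (Subgroup.mul_mem_cancel_right _ (MonoidHom.mem_range.2 ⟨t, rfl⟩)).not.2 hx
    · simp [← ht, of_apply_eq_base]
  · exact ⟨[⟨i, x⟩, ⟨j, y * g⟩], by simp [*], rfl, by simp⟩

theorem IsReducedWord.exists_append_mul_of {T : List (Σ i, G i)} {a b : Σ i, G i}
    (h : IsReducedWord φ (T ++ [a, b])) (v : Σ i, G i) :
    ∃ P ≠ [], IsReducedWord φ (T ++ P) ∧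
      wordProd φ (T ++ P) = wordProd φ (T ++ [a, b]) * of v.1 v.2 := by
  obtain ⟨hT, hab, hjoin⟩ := isReducedWord_append.1 h
  obtain ⟨P, hP, hhead, hprod⟩ := exists_isReducedWord_eq_pair_mul_of hab v
  refine ⟨P, by rintro rfl; simp at hhead, isReducedWord_append.2 ⟨hT, hP, ?_⟩, ?_⟩
  · simpa [hhead] using hjoin
  · simp [hprod, mul_assoc]

theorem IsReducedWord.exists_append_mul_wordProd {T U : List (Σ i, G i)}
    (h : IsReducedWord φ (T ++ U)) {V : List (Σ i, G i)} (hV : V.length < U.length) :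
    ∃ P, IsReducedWord φ (T ++ P) ∧
      wordProd φ (T ++ P) = wordProd φ (T ++ U) * wordProd φ V := by
  induction V generalizing U with
  | nil => exact ⟨U, h, by simp⟩
  | cons v V ih =>
    obtain ⟨U, b, rfl⟩ := U.eq_nil_or_concat'.resolve_left (by rintro rfl; simp at hV)
    obtain ⟨U, a, rfl⟩ := U.eq_nil_or_concat'.resolve_left (by rintro rfl; simp at hV)
    rw [List.append_assoc, List.singleton_append, ← List.append_assoc] at h
    obtain ⟨P₁, hP₁, hred₁, hprod₁⟩ := h.exists_append_mul_of v
    rw [List.append_assoc] at hred₁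
    obtain ⟨P, hred, hprod⟩ := ih hred₁ (by
      have := List.length_pos_iff.2 hP₁
      simp only [List.length_cons, List.length_append, List.length_nil] at hV ⊢
      omega)
    refine ⟨P, hred, ?_⟩
    rw [hprod, ← List.append_assoc, hprod₁]
    simp [mul_assoc]

theorem isReducedWord_conj {Z : List (Σ i, G i)} (hZ : IsReducedWord φ Z) (hZne : Z ≠ [])
    {j : ι} {w : G j} (hw : w ∉ (φ j).range)
    (hhead : ∀ i ∈ (Z.map Sigma.fst).head?, i ≠ j)
    (hlast : ∀ i ∈ (Z.map Sigma.fst).getLast?, i ≠ j) :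
    IsReducedWord φ ([⟨j, w⟩] ++ Z ++ [⟨j, w⁻¹⟩]) := by
  obtain ⟨Z, z, rfl⟩ := Z.eq_nil_or_concat'.resolve_left hZne
  refine isReducedWord_append.2 ⟨isReducedWord_append.2 ⟨isReducedWord_singleton.2 hw, hZ, ?_⟩,
    isReducedWord_singleton.2 (inv_mem_iff.not.2 hw), ?_⟩
  · simpa [eq_comm] using hhead
  · simpa [List.getLast?_cons] using hlast

theorem wordProd_conj (Z : List (Σ i, G i)) {j : ι} (w : G j) :
    wordProd φ ([⟨j, w⟩] ++ Z ++ [⟨j, w⁻¹⟩]) = of j w * wordProd φ Z * (of j w)⁻¹ := by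
  simp [mul_assoc]

end Words

section TwoFactors

variable {A : Type} [Group A] {G : Bool → Type} [∀ i, Group (G i)] {φ : ∀ i, A →* G i}

theorem not_inFactor_of_ne (hφ : ∀ i, Function.Injective (φ i)) {i t : Bool} (hit : i ≠ t)
    {g : G i} (hg : g ∉ (φ i).range) : ¬ InFactor φ t (of i g) := fun h =>
  hg <| (of_mem_range_base_iff hφ).1 <|
    inf_of_range_eq_base_range hφ hit ▸ ⟨MonoidHom.mem_range.2 ⟨g, rfl⟩, h⟩

theorem isNormalDecomp_wordProd (hφ : ∀ i, Function.Injective (φ i))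
    {L : List (Σ i, G i)} (hL : IsReducedWord φ L) (hne : L ≠ []) :
    IsNormalDecomp φ (wordProd φ L) (L.map fun p => of p.1 p.2) := by
  refine ⟨by simpa using hne, rfl, ?_, ?_, ?_⟩
  · simp only [List.mem_map]
    rintro _ ⟨p, hp, rfl⟩
    refine ⟨fun h1 => hL.1 p hp ?_, ?_⟩
    · rw [of_injective hφ p.1 (h1.trans (map_one _).symm)]
      exact one_mem _
    · obtain ⟨_ | _, g⟩ := p
      · exact Or.inr ⟨g, rfl⟩
      · exact Or.inl ⟨g, rfl⟩
  · intro n x y hx hy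
    rw [List.getElem?_map] at hx hy
    obtain ⟨p, hp, rfl⟩ := Option.map_eq_some_iff.1 hx
    obtain ⟨q, hq, rfl⟩ := Option.map_eq_some_iff.1 hy
    have hpq : p.1 ≠ q.1 := by
      obtain ⟨hn, rfl⟩ := List.getElem?_eq_some_iff.1 hp
      obtain ⟨hn', rfl⟩ := List.getElem?_eq_some_iff.1 hq
      have := List.isChain_iff_getElem.1 hL.2 n (by simpa using hn')
      rwa [List.getElem_map, List.getElem_map] at this
    have key : ∀ t, ¬ (InFactor φ t (of p.1 p.2) ∧ InFactor φ t (of q.1 q.2)) := by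
      rintro t ⟨hpt, hqt⟩
      by_cases h : p.1 = t
      · exact not_inFactor_of_ne hφ (h ▸ hpq.symm) (hL.1 q (List.mem_of_getElem? hq)) hqt
      · exact not_inFactor_of_ne hφ h (hL.1 p (List.mem_of_getElem? hp)) hpt
    exact ⟨key true, key false⟩
  · simp only [List.mem_map]
    rintro - _ ⟨p, hp, rfl⟩
    exact (of_mem_range_base_iff hφ).not.2 (hL.1 p hp)

theorem isEssentialCoset_of_isReducedWord (hφ : ∀ i, Function.Injective (φ i))
    {H : Subgroup (PushoutI φ)} {L : List (Σ i, G i)} (hL : IsReducedWord φ L)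
    (hLH : wordProd φ L ∈ H) {m : ℕ} (hm : m < L.length) {s : PushoutI φ}
    (hs : InFactor φ L[m].1 s) {c : PushoutI φ} (hc : c * (wordProd φ (L.take m) * s)⁻¹ ∈ H) :
    IsEssentialCoset φ H c := by
  refine Or.inr ⟨L.map fun p => of p.1 p.2, m, s, ?_, ?_, ?_, ?_, ?_⟩
  · exact isNormalDecomp_wordProd hφ hL (List.ne_nil_of_length_pos (by omega))
  · exact hLH
  · simpa using hm
  · refine ⟨L[m].1, of L[m].1 L[m].2, ?_, ⟨L[m].2, rfl⟩, hs⟩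
    simp [hm]
  · rwa [← List.map_take]

theorem exists_notMem_range_of_ne_top {i j : Bool} (hij : i ≠ j)
    (h : (of (φ := φ) j).range ≠ ⊤) : ∃ w : G i, w ∉ (φ i).range := by
  by_contra! hall
  suffices ∀ g, g ∈ (of (φ := φ) j).range from h (eq_top_iff.2 fun g _ => this g)
  intro g
  induction g using PushoutI.induction_on with
  | of k y =>
    by_cases hk : k = j
    · subst hk
      exact MonoidHom.mem_range.2 ⟨y, rfl⟩
    · obtain rfl : k = i := by cases i <;> cases j <;> cases k <;> simp_all
      obtain ⟨t, rfl⟩ := hall y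
      exact MonoidHom.mem_range.2 ⟨φ j t, by rw [of_apply_eq_base, of_apply_eq_base]⟩
  | base t => exact MonoidHom.mem_range.2 ⟨φ j t, of_apply_eq_base φ j t⟩
  | mul x y hx hy => exact mul_mem hx hy

section NormalSubgroup

variable {H : Subgroup (PushoutI φ)}

theorem exists_isReducedWord_mem_head (hφ : ∀ i, Function.Injective (φ i)) (hH : H.Normal)
    (hHof : ∀ i, ¬ H ≤ (of (φ := φ) i).range) (j : Bool) :
    ∃ Z, IsReducedWord φ Z ∧ wordProd φ Z ∈ H ∧ (Z.map Sigma.fst).head? = some j := by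
  obtain ⟨g, hgH, hg⟩ := SetLike.not_le_iff_exists.1 (hHof true)
  obtain ⟨a, rfl⟩ | ⟨Z, hZne, hZ, rfl⟩ := mem_range_base_or_exists_isReducedWord hφ g
  · exact absurd (MonoidHom.mem_range.2 ⟨φ true a, of_apply_eq_base φ true a⟩) hg
  by_cases hhead : (Z.map Sigma.fst).head? = some j
  · exact ⟨Z, hZ, hgH, hhead⟩
  by_cases hlast : (Z.map Sigma.fst).getLast? = some j
  · refine ⟨invWord Z, hZ.invWord, by rw [wordProd_invWord]; exact inv_mem hgH, ?_⟩
    rwa [map_fst_invWord, List.head?_reverse]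
  obtain ⟨w, hw⟩ := exists_notMem_range_of_ne_top (Bool.self_ne_not j)
    fun htop => hHof (!j) (htop ▸ le_top)
  refine ⟨[⟨j, w⟩] ++ Z ++ [⟨j, w⁻¹⟩], isReducedWord_conj hZ hZne hw ?_ ?_, ?_, by simp⟩
  · rintro i hi rfl
    exact hhead hi
  · rintro i hi rfl
    exact hlast hi
  · rw [wordProd_conj]
    exact hH.conj_mem _ hgH _

theorem exists_isReducedWord_mem_head_getLast (hφ : ∀ i, Function.Injective (φ i))
    (hH : H.Normal) (hHof : ∀ i, ¬ H ≤ (of (φ := φ) i).range) (j : Bool) :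
    ∃ Z, IsReducedWord φ Z ∧ wordProd φ Z ∈ H ∧ (Z.map Sigma.fst).head? = some j ∧
      (Z.map Sigma.fst).getLast? = some (!j) := by
  obtain ⟨Z, hZ, hZH, hhead⟩ := exists_isReducedWord_mem_head hφ hH hHof j
  by_cases hlast : (Z.map Sigma.fst).getLast? = some (!j)
  · exact ⟨Z, hZ, hZH, hhead, hlast⟩
  have hZne : Z ≠ [] := by
    rintro rfl
    simp at hhead
  obtain ⟨w, hw⟩ := exists_notMem_range_of_ne_top (Bool.not_ne_self j)
    fun htop => hHof j (htop ▸ le_top)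
  have hconj := isReducedWord_conj hZ hZne hw (by simp [hhead])
    (by rintro i hi rfl; exact hlast hi)
  refine ⟨Z ++ ([⟨!j, w⟩] ++ Z ++ [⟨!j, w⁻¹⟩]), isReducedWord_append.2 ⟨hZ, hconj, ?_⟩, ?_, ?_, ?_⟩
  · rintro i hi _ hk rfl
    simp only [List.map_append, List.map_cons, List.map_nil, List.cons_append, List.head?_cons,
      Option.mem_def, Option.some.injEq] at hk
    exact hlast (hk ▸ hi)
  · rw [wordProd_append, wordProd_conj]
    exact mul_mem hZH (hH.conj_mem _ hZH _)
  · simp [hhead]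
  · simp [List.getLast?_cons]

theorem exists_isReducedWord_mem_head_getLast_le_length (hφ : ∀ i, Function.Injective (φ i))
    (hH : H.Normal) (hHof : ∀ i, ¬ H ≤ (of (φ := φ) i).range) (j : Bool) (n : ℕ) :
    ∃ W, IsReducedWord φ W ∧ wordProd φ W ∈ H ∧ (W.map Sigma.fst).head? = some j ∧
      (W.map Sigma.fst).getLast? = some (!j) ∧ n ≤ W.length := by
  obtain ⟨Z, hZ, hZH, hZhead, hZlast⟩ := exists_isReducedWord_mem_head_getLast hφ hH hHof j
  induction n with
  | zero => exact ⟨Z, hZ, hZH, hZhead, hZlast, Nat.zero_le _⟩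
  | succ n ih =>
    obtain ⟨W, hW, hWH, hWhead, hWlast, hWlen⟩ := ih
    have hZlen : 0 < Z.length := by
      rw [List.length_pos_iff]
      rintro rfl
      simp at hZhead
    refine ⟨Z ++ W, isReducedWord_append.2 ⟨hZ, hW, by simp [hZlast, hWhead]⟩,
      by rw [wordProd_append]; exact mul_mem hZH hWH, by simp [hZhead], by simp [hWlast], ?_⟩
    rw [List.length_append]
    omega

theorem isEssentialCoset_of_mem_range (hφ : ∀ i, Function.Injective (φ i)) (hH : H.Normal)
    (hHof : ∀ i, ¬ H ≤ (of (φ := φ) i).range) {i : Bool} {c : PushoutI φ}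
    (hc : c ∈ (of i).range) : IsEssentialCoset φ H c := by
  obtain ⟨W, hW, hWH, hhead, -⟩ := exists_isReducedWord_mem_head_getLast_le_length hφ hH hHof i 0
  obtain ⟨w, W, rfl⟩ := List.exists_cons_of_ne_nil (show W ≠ [] by rintro rfl; simp at hhead)
  simp only [List.map_cons, List.head?_cons, Option.some.injEq] at hhead
  exact isEssentialCoset_of_isReducedWord hφ hW hWH (m := 0) (by simp)
    (by rw [List.getElem_cons_zero, hhead]; exact hc) (by simp)

theorem isEssentialCoset_wordProd (hφ : ∀ i, Function.Injective (φ i)) (hH : H.Normal)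
    (hHof : ∀ i, ¬ H ≤ (of (φ := φ) i).range) {C : List (Σ i, G i)} (hC : IsReducedWord φ C)
    (hCne : C ≠ []) : IsEssentialCoset φ H (wordProd φ C) := by
  obtain ⟨C₀, x, hCx⟩ := C.eq_nil_or_concat'.resolve_left hCne
  obtain ⟨W, hW, hWH, hhead, -, hlen⟩ :=
    exists_isReducedWord_mem_head_getLast_le_length hφ hH hHof (!x.1) (C.length + 2)
  set k := W.length - (C.length + 1)
  have hCW : IsReducedWord φ (C ++ W.take k ++ W.drop k) := by
    rw [List.append_assoc, List.take_append_drop]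
    exact isReducedWord_append.2 ⟨hC, hW, by simp [hCx, hhead]⟩
  obtain ⟨P, hred, hprod⟩ := hCW.exists_append_mul_wordProd (V := invWord C) (by simp; omega)
  refine isEssentialCoset_of_isReducedWord hφ hred ?_ (m := C.length) (by simp; omega)
    (s := 1) (one_mem _) ?_
  · rw [hprod, List.append_assoc, List.take_append_drop, wordProd_append, wordProd_invWord]
    exact hH.conj_mem _ hWH _
  · rw [List.append_assoc, List.take_left]
    simp

end NormalSubgroup

end TwoFactors

end Monoid.PushoutI

theorem normal_fg_not_in_factors_all_cosets_essential_general
    (A : Type) [Group A] (Gf : Bool → Type) [∀ i, Group (Gf i)]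
    (φ : ∀ i : Bool, A →* Gf i) (hφ : ∀ i, Function.Injective (φ i))
    (H : Subgroup (PushoutI φ)) (hnormal : H.Normal)
    (h1 : ¬ H ≤ (PushoutI.of (φ := φ) true).range)
    (h2 : ¬ H ≤ (PushoutI.of (φ := φ) false).range) :
    ∀ c : PushoutI φ, IsEssentialCoset φ H c := by
  have hHof : ∀ i, ¬ H ≤ (PushoutI.of (φ := φ) i).range := Bool.forall_bool.2 ⟨h2, h1⟩
  intro c
  rcases PushoutI.mem_range_base_or_exists_isReducedWord hφ c with ⟨a, rfl⟩ | ⟨C, hCne, hC, rfl⟩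
  · exact PushoutI.isEssentialCoset_of_mem_range hφ hnormal hHof (i := true)
      ⟨φ true a, PushoutI.of_apply_eq_base φ true a⟩
  · exact PushoutI.isEssentialCoset_wordProd hφ hnormal hHof hC hCne

/-- If `H` is a nontrivial finitely generated normal subgroup of the amalgam
`G = G₁ *_A G₂` of finite groups that is not contained in either factor, then every
right coset of `H` in `G` is essential. -/
theorem normal_fg_not_in_factors_all_cosets_essential
    (A : Type) [Group A] (Gf : Bool → Type) [∀ i, Group (Gf i)] [∀ i, Finite (Gf i)]
    (φ : ∀ i : Bool, A →* Gf i) (hφ : ∀ i, Function.Injective (φ i))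
    (H : Subgroup (PushoutI φ)) (hne : H ≠ ⊥) (hfg : H.FG) (hnormal : H.Normal)
    (h1 : ¬ H ≤ (PushoutI.of (φ := φ) true).range)
    (h2 : ¬ H ≤ (PushoutI.of (φ := φ) false).range) :
    ∀ c : PushoutI φ, IsEssentialCoset φ H c :=
  normal_fg_not_in_factors_all_cosets_essential_general A Gf φ hφ H hnormal h1 h2
end

section
/- There exists a constant C > 0 (depending only on G₁, G₂, A and the amalgam G) such that for every finite subset S of G, the number of essential right cosets of the subgroup H = ⟨S⟩ generated by S is at most C·(1 + Σ_{s∈S} ℓ(s)), where ℓ(s) denotes the word length of s with respect to the generating set (ι₁(G₁) ∪ ι₂(G₂)) \ {1} of G. -/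
open Monoid

/-- The word length of `g ∈ G = G₁ *_A G₂` with respect to the generating set
`(ι₁(G₁) ∪ ι₂(G₂)) \ {1}`. -/
noncomputable def amalgamWordLength {A : Type} [Group A] {Gf : Bool → Type}
    [∀ i, Group (Gf i)] (φ : ∀ i : Bool, A →* Gf i) (g : PushoutI φ) : ℕ :=
  sInf {n : ℕ | ∃ L : List (PushoutI φ), L.length = n ∧
    (∀ x ∈ L, x ≠ 1 ∧ (InFactor φ true x ∨ InFactor φ false x)) ∧ L.prod = g}

/-!
Write an element `h` of `H = ⟨S⟩` as a concatenation `W` of geodesic words for the generators and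
their formal inverses; every prefix of `W` then lies in a coset `H·q` with `q` the product of a
prefix of one geodesic word. Rewriting `W` into normal form letter by letter, with the
`A`-part carried along separately, every proper prefix of the current normal form survives the
next step, so every prefix of a normal decomposition of `h` is a prefix of `W` times an element
of `A`. Hence every essential coset is `H·q·u` with `q` among at most `1 + ∑ (ℓ(s) + 1)`
prefix products and `u` in the finite set `ι₁(G₁) ∪ ι₂(G₂)`.
-/

section Group

variable {G : Type*} [Group G]

theorem exists_list_prefix_mem_of_mem_closure {S T : Set G} (w : G → List G)
    (hw : ∀ s ∈ S, (w s).prod = s) (hT₁ : 1 ∈ T) (hT : ∀ s ∈ S, ∀ k, ((w s).take k).prod ∈ T)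
    {h : G} (hh : h ∈ Subgroup.closure S) :
    ∃ W : List G, W.prod = h ∧ (∀ x ∈ W, ∃ s ∈ S, x ∈ w s ∨ x⁻¹ ∈ w s) ∧
      ∀ V, V <+: W → ∃ q ∈ T, V.prod * q⁻¹ ∈ Subgroup.closure S := by
  induction hh using Subgroup.closure_induction with
  | mem s hs =>
    refine ⟨w s, hw s hs, fun x hx => ⟨s, hs, .inl hx⟩, fun V hV => ⟨V.prod, ?_, by simp⟩⟩
    rw [List.prefix_iff_eq_take.1 hV]
    exact hT s hs _
  | one => exact ⟨[], rfl, by simp, fun V hV => ⟨1, hT₁, by simp [List.prefix_nil.1 hV]⟩⟩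
  | mul x y hx _ ihx ihy =>
    obtain ⟨Wx, rfl, hWx, hpx⟩ := ihx
    obtain ⟨Wy, rfl, hWy, hpy⟩ := ihy
    refine ⟨Wx ++ Wy, List.prod_append, List.forall_mem_append.2 ⟨hWx, hWy⟩, fun V hV => ?_⟩
    rw [List.prefix_iff_eq_take.1 hV, List.take_append]
    by_cases hj : V.length ≤ Wx.length
    · rw [Nat.sub_eq_zero_of_le hj, List.take_zero, List.append_nil]
      exact hpx _ (List.take_prefix _ _)
    · obtain ⟨q, hq, hqH⟩ := hpy _ (List.take_prefix (V.length - Wx.length) Wy)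
      refine ⟨q, hq, ?_⟩
      rw [List.take_of_length_le (by omega), List.prod_append, mul_assoc]
      exact mul_mem hx hqH
  | inv x hx ihx =>
    obtain ⟨Wx, rfl, hWx, hpx⟩ := ihx
    refine ⟨(Wx.map (·⁻¹)).reverse, (List.prod_inv_reverse Wx).symm, fun z hz => ?_,
      fun V hV => ?_⟩
    · obtain ⟨y, hy, rfl⟩ : ∃ y ∈ Wx, y⁻¹ = z := by simpa using hz
      obtain ⟨s, hs, h | h⟩ := hWx y hy
      exacts [⟨s, hs, .inr (by simpa using h)⟩, ⟨s, hs, .inl h⟩]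
    have hV' : V.prod = Wx.prod⁻¹ * (Wx.take (Wx.length - V.length)).prod := by
      conv_lhs => rw [List.prefix_iff_eq_take.1 hV]
      rw [List.take_reverse, List.length_map, ← List.map_drop,
        ← List.prod_inv_reverse, ← List.prod_take_mul_prod_drop Wx (Wx.length - V.length)]
      group
    obtain ⟨q, hq, hqH⟩ := hpx _ (List.take_prefix (Wx.length - V.length) Wx)
    refine ⟨q, hq, ?_⟩
    rw [hV', mul_assoc]
    exact mul_mem (inv_mem hx) hqH

def prefixProds [DecidableEq G] (S : Finset G) (w : G → List G) : Finset G :=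
  insert 1 (S.biUnion fun s => ((w s).inits.map List.prod).toFinset)

section PrefixProds

variable [DecidableEq G] {S : Finset G} {w : G → List G}

theorem one_mem_prefixProds : 1 ∈ prefixProds S w :=
  Finset.mem_insert_self _ _

theorem take_prod_mem_prefixProds {s : G} (hs : s ∈ S) (k : ℕ) :
    ((w s).take k).prod ∈ prefixProds S w :=
  Finset.mem_insert_of_mem <| Finset.mem_biUnion.2 ⟨s, hs, List.mem_toFinset.2 <|
    List.mem_map.2 ⟨_, (List.mem_inits _ _).2 (List.take_prefix k _), rfl⟩⟩

theorem card_le_one_add_sum_length (hw : ∀ s ∈ S, (w s).prod = s) :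
    S.card ≤ 1 + ∑ s ∈ S, (w s).length := by
  calc S.card = ∑ s ∈ S, 1 := Finset.card_eq_sum_ones S
    _ ≤ ∑ s ∈ S, ((w s).length + if s = 1 then 1 else 0) := Finset.sum_le_sum fun s hs => by
        by_cases h : s = 1
        · simp [h]
        · have : w s ≠ [] := fun h' => h (by rw [← hw s hs, h', List.prod_nil])
          simpa [h, Nat.one_le_iff_ne_zero] using this
    _ ≤ 1 + ∑ s ∈ S, (w s).length := by
        rw [Finset.sum_add_distrib, Finset.sum_ite_eq']
        split_ifs <;> omega

theorem card_prefixProds_le (hw : ∀ s ∈ S, (w s).prod = s) :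
    (prefixProds S w).card ≤ 2 * (1 + ∑ s ∈ S, (w s).length) := by
  have hbiUnion : (S.biUnion fun s => ((w s).inits.map List.prod).toFinset).card ≤
      ∑ s ∈ S, ((w s).length + 1) :=
    Finset.card_biUnion_le.trans <| Finset.sum_le_sum fun s _ =>
      (List.toFinset_card_le _).trans (by simp)
  have hS := card_le_one_add_sum_length hw
  rw [Finset.sum_add_distrib, ← Finset.card_eq_sum_ones] at hbiUnion
  exact (Finset.card_insert_le _ _).trans (by omega)

end PrefixProds

end Group

section Amalgam

variable {A : Type} [Group A] {Gf : Bool → Type} [∀ i, Group (Gf i)] {φ : ∀ i : Bool, A →* Gf i}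

theorem InFactor.mul {i : Bool} {x y : PushoutI φ} (hx : InFactor φ i x) (hy : InFactor φ i y) :
    InFactor φ i (x * y) :=
  mul_mem hx hy

theorem InFactor.inv {i : Bool} {x : PushoutI φ} (hx : InFactor φ i x) : InFactor φ i x⁻¹ :=
  inv_mem hx

theorem inFactor_of_mem_base {x : PushoutI φ} (hx : x ∈ (PushoutI.base φ).range) (i : Bool) :
    InFactor φ i x := by
  obtain ⟨a, rfl⟩ := hx
  exact ⟨φ i a, PushoutI.of_apply_eq_base φ i a⟩

theorem mem_base_of_inFactor_of_ne (hφ : ∀ i, Function.Injective (φ i)) {i j : Bool}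
    (hij : i ≠ j) {x : PushoutI φ} (hi : InFactor φ i x) (hj : InFactor φ j x) :
    x ∈ (PushoutI.base φ).range :=
  PushoutI.inf_of_range_eq_base_range hφ hij ▸ ⟨hi, hj⟩

variable (φ) in
/-- The normal decompositions of length `> 1`, together with `[]`. -/
def IsReducedSeq (R : List (PushoutI φ)) : Prop :=
  (∀ x ∈ R, x ∉ (PushoutI.base φ).range ∧ ∃ i, InFactor φ i x) ∧
    R.IsChain fun x y => ∀ i, InFactor φ i x → ¬ InFactor φ i y

theorem IsReducedSeq.exists_word {R : List (PushoutI φ)} (hR : IsReducedSeq φ R) :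
    ∃ w : CoprodI.Word Gf, PushoutI.Reduced φ w ∧
      w.toList.map (fun p => PushoutI.of (φ := φ) p.1 p.2) = R := by
  induction R with
  | nil => exact ⟨.empty, by simp [PushoutI.Reduced, CoprodI.Word.empty], rfl⟩
  | cons x R ih =>
    obtain ⟨hxR, hchain⟩ := hR
    obtain ⟨w, hw, rfl⟩ := ih ⟨fun y hy => hxR y (.tail _ hy), hchain.tail⟩
    obtain ⟨hxb, i, g, rfl⟩ := hxR _ List.mem_cons_self
    have hg : g ∉ (φ i).range := by
      rintro ⟨a, rfl⟩
      exact hxb ⟨a, (PushoutI.of_apply_eq_base φ i a).symm⟩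
    have hidx : w.fstIdx ≠ some i := by
      rcases hwl : w.toList with _ | ⟨⟨j, g'⟩, rest⟩
      · simp [CoprodI.Word.fstIdx, hwl]
      · rw [hwl] at hchain
        simp only [CoprodI.Word.fstIdx, hwl, List.head?_cons, Option.map_some, ne_eq,
          Option.some.injEq]
        rintro rfl
        exact (List.isChain_cons_cons.1 hchain).1 j ⟨g, rfl⟩ ⟨g', rfl⟩
    refine ⟨.cons g w hidx (fun h => hg (h ▸ one_mem _)), fun p hp => ?_, by simp⟩
    rw [CoprodI.Word.cons_toList] at hp
    rcases List.mem_cons.1 hp with rfl | hp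
    exacts [hg, hw p hp]

theorem IsReducedSeq.eq_nil_of_prod_mem_base (hφ : ∀ i, Function.Injective (φ i))
    {R : List (PushoutI φ)} (hR : IsReducedSeq φ R) (h : R.prod ∈ (PushoutI.base φ).range) :
    R = [] := by
  obtain ⟨w, hw, rfl⟩ := hR.exists_word
  have hprod : PushoutI.ofCoprodI w.prod =
      (w.toList.map fun p => PushoutI.of (φ := φ) p.1 p.2).prod := by
    simp [CoprodI.Word.prod, map_list_prod, Function.comp_def]
  rw [hw.eq_empty_of_mem_range hφ (hprod ▸ h)]
  rfl

theorem IsReducedSeq.exists_append_mul_eq (hφ : ∀ i, Function.Injective (φ i))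
    {M : List (PushoutI φ)} {i : Bool} {y : PushoutI φ} (hM : IsReducedSeq φ M)
    (hlast : ∀ x ∈ M.getLast?, ¬ InFactor φ i x) (hy : InFactor φ i y) :
    ∃ R a, IsReducedSeq φ R ∧ a ∈ (PushoutI.base φ).range ∧ M.prod * y = R.prod * a ∧
      M <+: R := by
  by_cases hyb : y ∈ (PushoutI.base φ).range
  · exact ⟨M, y, hM, hyb, rfl, List.prefix_refl M⟩
  refine ⟨M ++ [y], 1, ⟨?_, ?_⟩, one_mem _, by simp, List.prefix_append _ _⟩
  · refine List.forall_mem_append.2 ⟨hM.1, ?_⟩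
    simpa only [List.mem_singleton, forall_eq] using ⟨hyb, i, hy⟩
  · refine List.isChain_append.2 ⟨hM.2, List.isChain_singleton _, fun x hx z hz j hxj hzj => ?_⟩
    obtain rfl : z = y := by simpa using hz.symm
    by_cases hji : j = i
    · exact hlast x hx (hji ▸ hxj)
    · exact hyb (mem_base_of_inFactor_of_ne hφ hji hzj hy)

/-- Since the `A`-part `a` is split off, right multiplication by a factor element changes at most
the last letter of a reduced sequence. -/
theorem IsReducedSeq.exists_mul_eq (hφ : ∀ i, Function.Injective (φ i))
    {R : List (PushoutI φ)} {i : Bool} {y : PushoutI φ} (hR : IsReducedSeq φ R)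
    (hy : InFactor φ i y) :
    ∃ R' a, IsReducedSeq φ R' ∧ a ∈ (PushoutI.base φ).range ∧ R.prod * y = R'.prod * a ∧
      ∀ V, V <+: R → V = R ∨ V <+: R' := by
  rcases List.eq_nil_or_concat' R with rfl | ⟨M, x, rfl⟩
  · obtain ⟨R', a, hR', ha, he, -⟩ := hR.exists_append_mul_eq hφ (by simp) hy
    exact ⟨R', a, hR', ha, he, fun V hV => .inl (List.prefix_nil.1 hV)⟩
  have hM : IsReducedSeq φ M :=
    ⟨fun z hz => hR.1 z (List.mem_append_left _ hz), hR.2.prefix (List.prefix_append _ _)⟩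
  have hprefix : ∀ {R'}, M <+: R' → ∀ V, V <+: M ++ [x] → V = M ++ [x] ∨ V <+: R' :=
    fun hMR' V hV => (List.prefix_concat_iff.1 hV).imp_right (·.trans hMR')
  by_cases hx : InFactor φ i x
  · have hlast : ∀ z ∈ M.getLast?, ¬ InFactor φ i z := fun z hz hzi =>
      (List.isChain_append.1 hR.2).2.2 z hz x (by simp) i hzi hx
    obtain ⟨R', a, hR', ha, he, hMR'⟩ := hM.exists_append_mul_eq hφ hlast (hx.mul hy)
    exact ⟨R', a, hR', ha, by simpa [mul_assoc] using he, hprefix hMR'⟩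
  · obtain ⟨R', a, hR', ha, he, hMR'⟩ := hR.exists_append_mul_eq hφ (by simpa using hx) hy
    exact ⟨R', a, hR', ha, he, hprefix ((List.prefix_append M [x]).trans hMR')⟩

theorem IsReducedSeq.exists_prefix_mul_eq (hφ : ∀ i, Function.Injective (φ i))
    {W : List (PushoutI φ)} (hW : ∀ x ∈ W, ∃ i, InFactor φ i x) {R : List (PushoutI φ)}
    {a : PushoutI φ} (hR : IsReducedSeq φ R) (ha : a ∈ (PushoutI.base φ).range)
    (hWR : W.prod = R.prod * a) :
    ∀ V, V <+: R → ∃ V', V' <+: W ∧ ∃ b ∈ (PushoutI.base φ).range, V.prod = V'.prod * b := by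
  induction W using List.reverseRecOn generalizing R a with
  | nil =>
    obtain rfl : R = [] := hR.eq_nil_of_prod_mem_base hφ <| by
      rw [eq_inv_of_mul_eq_one_left hWR.symm]
      exact inv_mem ha
    intro V hV
    exact ⟨[], List.nil_prefix, 1, one_mem _, by simp [List.prefix_nil.1 hV]⟩
  | append_singleton W x ih =>
    obtain ⟨i, hx⟩ := hW x (by simp)
    obtain ⟨R', a', hR', ha', he, hRR'⟩ :=
      hR.exists_mul_eq hφ ((inFactor_of_mem_base ha i).mul hx.inv)
    have ih' := ih (fun z hz => hW z (List.mem_append_left _ hz)) hR' ha' <| by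
      rw [← he, ← mul_assoc, ← hWR, List.prod_append]
      simp
    intro V hV
    rcases hRR' V hV with rfl | hVR'
    · exact ⟨W ++ [x], List.prefix_refl _, a⁻¹, inv_mem ha, by rw [hWR, mul_inv_cancel_right]⟩
    · obtain ⟨V', hV'W, b, hb, hVb⟩ := ih' V hVR'
      exact ⟨V', hV'W.trans (List.prefix_append _ _), b, hb, hVb⟩

theorem IsNormalDecomp.isReducedSeq {g : PushoutI φ} {L : List (PushoutI φ)}
    (hL : IsNormalDecomp φ g L) (hlen : 1 < L.length) : IsReducedSeq φ L := by
  obtain ⟨-, -, hletters, halt, hbase⟩ := hL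
  refine ⟨fun x hx => ⟨hbase hlen x hx, ?_⟩, List.isChain_iff_getElem.2 fun n hn => ?_⟩
  · rcases (hletters x hx).2 with h | h
    exacts [⟨true, h⟩, ⟨false, h⟩]
  · have := halt n _ _ (List.getElem?_eq_getElem (by omega)) (List.getElem?_eq_getElem hn)
    rintro (_ | _) h h'
    exacts [this.2 ⟨h, h'⟩, this.1 ⟨h, h'⟩]

theorem IsNormalDecomp.exists_prefix_mul_eq (hφ : ∀ i, Function.Injective (φ i))
    {W L : List (PushoutI φ)} (hW : ∀ x ∈ W, ∃ i, InFactor φ i x)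
    (hL : IsNormalDecomp φ W.prod L) :
    ∀ V, V <+: L → ∃ V', V' <+: W ∧ ∃ b ∈ (PushoutI.base φ).range, V.prod = V'.prod * b := by
  by_cases hlen : 1 < L.length
  · exact (hL.isReducedSeq hlen).exists_prefix_mul_eq hφ hW (one_mem _) (by rw [hL.2.1, mul_one])
  intro V hV
  rcases Nat.eq_zero_or_pos V.length with hV0 | hV0
  · exact ⟨[], List.nil_prefix, 1, one_mem _, by simp [List.length_eq_zero_iff.1 hV0]⟩
  · rw [hV.eq_of_length (by have := hV.length_le; omega), hL.2.1]
    exact ⟨W, List.prefix_refl W, 1, one_mem _, (mul_one _).symm⟩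

theorem IsEssentialCoset.exists_mul_inv_mem (hφ : ∀ i, Function.Injective (φ i))
    {S T : Set (PushoutI φ)} (w : PushoutI φ → List (PushoutI φ))
    (hw : ∀ s ∈ S, (w s).prod = s) (hwf : ∀ s ∈ S, ∀ x ∈ w s, ∃ i, InFactor φ i x)
    (hT₁ : 1 ∈ T) (hT : ∀ s ∈ S, ∀ k, ((w s).take k).prod ∈ T) {c : PushoutI φ}
    (hc : IsEssentialCoset φ (Subgroup.closure S) c) :
    ∃ q ∈ T, ∃ u, (∃ i, InFactor φ i u) ∧ c * (q * u)⁻¹ ∈ Subgroup.closure S := by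
  rcases hc with hc | ⟨L, m, t, hL, hLH, -, ⟨i, -, -, -, ht⟩, hcH⟩
  · exact ⟨1, hT₁, 1, ⟨true, one_mem _⟩, by simpa using hc⟩
  obtain ⟨W, hW, hWS, hWT⟩ := exists_list_prefix_mem_of_mem_closure w hw hT₁ hT hLH
  have hWf : ∀ x ∈ W, ∃ i, InFactor φ i x := fun x hx => by
    obtain ⟨s, hs, hx | hx⟩ := hWS x hx
    · exact hwf s hs x hx
    · exact (hwf s hs _ hx).imp fun _ h => inv_inv x ▸ h.inv
  obtain ⟨V, hVW, b, hb, hVb⟩ :=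
    IsNormalDecomp.exists_prefix_mul_eq hφ hWf (hW ▸ hL) _ (List.take_prefix m L)
  obtain ⟨q, hq, hqH⟩ := hWT V hVW
  refine ⟨q, hq, b * t, ⟨i, (inFactor_of_mem_base hb i).mul ht⟩, ?_⟩
  have : c * (q * (b * t))⁻¹ = c * ((L.take m).prod * t)⁻¹ * (V.prod * q⁻¹) := by
    rw [hVb]
    group
  rw [this]
  exact mul_mem hcH hqH

open scoped Pointwise in
theorem ncard_essentialCosets_le (H : Subgroup (PushoutI φ)) (T U : Finset (PushoutI φ))
    (hTU : ∀ c, IsEssentialCoset φ H c → ∃ q ∈ T, ∃ u ∈ U, c * (q * u)⁻¹ ∈ H) :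
    (essentialCosets φ H).ncard ≤ T.card * U.card := by
  classical
  have hsub : essentialCosets φ H ⊆ (fun d => {g | g * d⁻¹ ∈ H}) '' ↑(T * U) := by
    rintro _ ⟨c, hc, rfl⟩
    obtain ⟨q, hq, u, hu, hc⟩ := hTU c hc
    refine ⟨q * u, Finset.mul_mem_mul hq hu, Set.ext fun g => ?_⟩
    have : g * c⁻¹ = g * (q * u)⁻¹ * (c * (q * u)⁻¹)⁻¹ := by group
    simp only [Set.mem_ofPred_eq, this, H.mul_mem_cancel_right (inv_mem hc)]
  calc (essentialCosets φ H).ncard ≤ ((fun d => {g | g * d⁻¹ ∈ H}) '' ↑(T * U)).ncard :=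
        Set.ncard_le_ncard hsub ((T * U).finite_toSet.image _)
    _ ≤ (↑(T * U) : Set (PushoutI φ)).ncard := Set.ncard_image_le (T * U).finite_toSet
    _ = (T * U).card := Set.ncard_coe_finset _
    _ ≤ T.card * U.card := Finset.card_mul_le

theorem finite_setOf_exists_inFactor [∀ i, Finite (Gf i)] :
    {x : PushoutI φ | ∃ i, InFactor φ i x}.Finite :=
  (Set.finite_iUnion fun i => Set.finite_range (PushoutI.of (φ := φ) i)).subset
    fun _ ⟨i, hx⟩ => Set.mem_iUnion.2 ⟨i, hx⟩

theorem exists_list_inFactor_prod_eq (g : PushoutI φ) :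
    ∃ L : List (PushoutI φ),
      (∀ x ∈ L, x ≠ 1 ∧ (InFactor φ true x ∨ InFactor φ false x)) ∧ L.prod = g := by
  have of_inFactor : ∀ i x, InFactor φ i x → ∃ L : List (PushoutI φ),
      (∀ x ∈ L, x ≠ 1 ∧ (InFactor φ true x ∨ InFactor φ false x)) ∧ L.prod = x := by
    intro i x hx
    by_cases h1 : x = 1
    · exact ⟨[], by simp, h1.symm⟩
    · refine ⟨[x], fun z hz => ?_, List.prod_singleton⟩
      rw [List.mem_singleton.1 hz]
      exact ⟨h1, by cases i <;> simp [hx]⟩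
  induction g using PushoutI.induction_on with
  | of i x => exact of_inFactor i _ ⟨x, rfl⟩
  | base a => exact of_inFactor true _ (inFactor_of_mem_base ⟨a, rfl⟩ true)
  | mul x y ihx ihy =>
    obtain ⟨Lx, hLx, rfl⟩ := ihx
    obtain ⟨Ly, hLy, rfl⟩ := ihy
    exact ⟨Lx ++ Ly, List.forall_mem_append.2 ⟨hLx, hLy⟩, List.prod_append⟩

theorem exists_list_length_eq_amalgamWordLength (g : PushoutI φ) :
    ∃ L : List (PushoutI φ), L.length = amalgamWordLength φ g ∧
      (∀ x ∈ L, x ≠ 1 ∧ (InFactor φ true x ∨ InFactor φ false x)) ∧ L.prod = g := by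
  obtain ⟨L, hL, hprod⟩ := exists_list_inFactor_prod_eq g
  exact Nat.sInf_mem (⟨_, L, rfl, hL, hprod⟩ : ∃ n, ∃ L : List (PushoutI φ), L.length = n ∧
    (∀ x ∈ L, x ≠ 1 ∧ (InFactor φ true x ∨ InFactor φ false x)) ∧ L.prod = g)

end Amalgam

/-- There is a constant `C > 0`, depending only on the amalgam `G = G₁ *_A G₂` of finite
groups, such that for every finite subset `S` of `G` the number of essential right cosets
of the subgroup `H = ⟨S⟩` is at most `C·(1 + Σ_{s ∈ S} ℓ(s))`, where `ℓ(s)` is the word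
length of `s` with respect to the generating set `(ι₁(G₁) ∪ ι₂(G₂)) \ {1}` of `G`. -/
theorem essentialCosets_card_linear_bound
    (A : Type) [Group A] (Gf : Bool → Type) [∀ i, Group (Gf i)] [∀ i, Finite (Gf i)]
    (φ : ∀ i : Bool, A →* Gf i) (hφ : ∀ i, Function.Injective (φ i)) :
    ∃ C : ℕ, 0 < C ∧ ∀ S : Finset (PushoutI φ),
      (essentialCosets φ (Subgroup.closure (S : Set (PushoutI φ)))).ncard ≤
        C * (1 + ∑ s ∈ S, amalgamWordLength φ s) := by
  classical
  set U := (finite_setOf_exists_inFactor (φ := φ)).toFinset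
  have hU : ∀ u, (∃ i, InFactor φ i u) → u ∈ U := fun u hu => Set.Finite.mem_toFinset _ |>.2 hu
  have hUpos : 0 < U.card := Finset.card_pos.2 ⟨1, hU 1 ⟨true, one_mem _⟩⟩
  choose geo hgeo_len hgeo_letters hgeo_prod using
    exists_list_length_eq_amalgamWordLength (φ := φ)
  refine ⟨2 * U.card, by omega, fun S => ?_⟩
  set T := prefixProds S geo
  have hcosets : ∀ c, IsEssentialCoset φ (Subgroup.closure S) c →
      ∃ q ∈ T, ∃ u ∈ U, c * (q * u)⁻¹ ∈ Subgroup.closure S := by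
    intro c hc
    obtain ⟨q, hq, u, hu, hcqu⟩ := hc.exists_mul_inv_mem hφ geo (fun s _ => hgeo_prod s)
      (fun s _ x hx => (hgeo_letters s x hx).2.elim (⟨true, ·⟩) (⟨false, ·⟩))
      one_mem_prefixProds (fun s hs => take_prod_mem_prefixProds hs)
    exact ⟨q, hq, u, hU u hu, hcqu⟩
  have hT : T.card ≤ 2 * (1 + ∑ s ∈ S, amalgamWordLength φ s) := by
    simpa only [hgeo_len] using card_prefixProds_le fun s _ => hgeo_prod s
  calc _ ≤ T.card * U.card := ncard_essentialCosets_le _ T U hcosets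
    _ ≤ 2 * (1 + ∑ s ∈ S, amalgamWordLength φ s) * U.card := Nat.mul_le_mul_right _ hT
    _ = 2 * U.card * (1 + ∑ s ∈ S, amalgamWordLength φ s) := by ring
end

section
/- Let H be a nontrivial subgroup of G with H ≤ ι₁(G₁) and H ∩ ι_A(A) = {1}. Then the essential right cosets of H in G are exactly the cosets H·s with s ∈ ι₁(G₁). -/
open Monoid

/-
A normal decomposition of length `n ≥ 2` yields a reduced word of length `n` in the coproduct,
and by the normal form theorem the product of such a word lies in no factor. Hence every
normal decomposition of an element of `H ≤ ι₁(G₁)` is a single letter `h ∈ H`, and a letter `s`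
in the same factor as `h` must lie in `ι₁(G₁)`: otherwise `h ∈ ι₁(G₁) ∩ ι₂(G₂) = ι_A(A)`, so
`h = 1`. Conversely, any `h ≠ 1` in `H` is its own normal decomposition, which makes every coset
`H·s` with `s ∈ ι₁(G₁)` essential.
-/

open Monoid

variable {A : Type} [Group A] {Gf : Bool → Type} [∀ i, Group (Gf i)]
  {φ : ∀ i : Bool, A →* Gf i}

namespace Monoid.PushoutI.Reduced

theorem length_le_one_of_prod_mem_range_of (hφ : ∀ i, Function.Injective (φ i))
    {w : CoprodI.Word Gf} (hw : Reduced φ w) {i : Bool}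
    (h : ofCoprodI w.prod ∈ (of (φ := φ) i).range) :
    w.toList.length ≤ 1 := by
  obtain ⟨g, hg⟩ := h
  by_cases hgφ : g ∈ (φ i).range
  · obtain ⟨a, rfl⟩ := hgφ
    have hbase : ofCoprodI w.prod ∈ (base φ).range := ⟨a, by rw [← hg, of_apply_eq_base]⟩
    simp [hw.eq_empty_of_mem_range hφ hbase, CoprodI.Word.empty]
  · -- `w` and the one-letter normal word `g` have the same product, hence the same shape.
    obtain ⟨d⟩ := NormalWord.transversal_nonempty φ hφ
    obtain ⟨w', hw'prod, hw'map⟩ := hw.exists_normalWord_prod_eq d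
    have hfst : (NormalWord.empty : NormalWord d).fstIdx ≠ some i := by
      simp [CoprodI.Word.fstIdx, NormalWord.empty, CoprodI.Word.empty]
    have hw' : w' = NormalWord.cons g NormalWord.empty hfst hgφ :=
      NormalWord.prod_injective (by simp [hw'prod, hg])
    have hlen : w.toList.length = w'.toList.length := by
      simpa using congrArg List.length hw'map.symm
    simp [hlen, hw', NormalWord.cons, CoprodI.Word.cons, NormalWord.empty, CoprodI.Word.empty]

end Monoid.PushoutI.Reduced

theorem exists_reduced_word_prod_eq (L : List (PushoutI φ))
    (hfac : ∀ x ∈ L, ∃ i, InFactor φ i x) (hbase : ∀ x ∈ L, x ∉ (PushoutI.base φ).range)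
    (halt : L.IsChain fun x y ↦ ∀ j, InFactor φ j x → ¬ InFactor φ j y) :
    ∃ w : CoprodI.Word Gf, PushoutI.Reduced φ w ∧
      PushoutI.ofCoprodI w.prod = L.prod ∧ w.toList.length = L.length ∧
      ∀ j, w.fstIdx = some j → ∀ x ∈ L.head?, InFactor φ j x := by
  induction L with
  | nil =>
    refine ⟨.empty, fun _ h ↦ by simp [CoprodI.Word.empty] at h, by simp [CoprodI.Word.prod],
      rfl, by simp⟩
  | cons x L ih =>
    have hxbase := hbase x List.mem_cons_self
    obtain ⟨i, g, rfl⟩ := hfac x List.mem_cons_self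
    obtain ⟨w, hwred, hwprod, hwlen, hwfst⟩ :=
      ih (fun y hy ↦ hfac y (List.mem_cons_of_mem _ hy))
        (fun y hy ↦ hbase y (List.mem_cons_of_mem _ hy)) halt.tail
    have hgφ : g ∉ (φ i).range := by
      rintro ⟨a, rfl⟩
      exact hxbase ⟨a, (PushoutI.of_apply_eq_base φ i a).symm⟩
    have hg1 : g ≠ 1 := by
      rintro rfl
      exact hgφ ⟨1, map_one _⟩
    have hwi : w.fstIdx ≠ some i := by
      intro hfst
      obtain ⟨y, hy⟩ : ∃ y, L.head? = some y := by
        cases L with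
        | nil => simp_all [CoprodI.Word.fstIdx]
        | cons y _ => exact ⟨y, rfl⟩
      exact (List.isChain_cons.mp halt).1 y hy i ⟨g, rfl⟩ (hwfst i hfst y hy)
    refine ⟨.cons g w hwi hg1, ?_, ?_, by simp [CoprodI.Word.cons, hwlen], ?_⟩
    · intro l hl
      rcases List.mem_cons.mp hl with rfl | hl
      · exact hgφ
      · exact hwred l hl
    · simp [CoprodI.Word.prod_cons, hwprod]
    · intro j hj y hy
      obtain rfl : i = j := Option.some_injective _ (by simpa using hj)
      obtain rfl : PushoutI.of i g = y := by simpa using hy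
      exact ⟨g, rfl⟩

namespace IsNormalDecomp

variable {g : PushoutI φ} {L : List (PushoutI φ)}

theorem isChain (hL : IsNormalDecomp φ g L) :
    L.IsChain fun x y ↦ ∀ j, InFactor φ j x → ¬ InFactor φ j y := by
  rw [List.isChain_iff_getElem]
  intro n hn j hx hy
  have h := hL.2.2.2.1 n _ _ (List.getElem?_eq_getElem (by omega))
    (List.getElem?_eq_getElem hn)
  cases j
  · exact h.2 ⟨hx, hy⟩
  · exact h.1 ⟨hx, hy⟩

theorem length_le_one_of_mem_range (hφ : ∀ i, Function.Injective (φ i))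
    (hL : IsNormalDecomp φ g L) {i : Bool} (hg : g ∈ (PushoutI.of (φ := φ) i).range) :
    L.length ≤ 1 := by
  have halt := hL.isChain
  obtain ⟨-, rfl, hent, -, hbase⟩ := hL
  by_contra! hlen
  have hfac : ∀ x ∈ L, ∃ i, InFactor φ i x := fun x hx ↦
    (hent x hx).2.elim (⟨true, ·⟩) (⟨false, ·⟩)
  obtain ⟨w, hw, hwprod, hwlen, -⟩ :=
    exists_reduced_word_prod_eq L hfac (hbase hlen) halt
  have := hw.length_le_one_of_prod_mem_range_of hφ (hwprod ▸ hg)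
  omega

theorem exists_eq_singleton_of_mem_range (hφ : ∀ i, Function.Injective (φ i))
    (hL : IsNormalDecomp φ g L) {i : Bool} (hg : g ∈ (PushoutI.of (φ := φ) i).range) :
    ∃ x, L = [x] := by
  have := hL.length_le_one_of_mem_range hφ hg
  have := List.length_pos_iff.mpr hL.1
  exact List.length_eq_one_iff.mp (by omega)

theorem singleton {x : PushoutI φ} (hx : x ≠ 1) {i : Bool} (hxi : InFactor φ i x) :
    IsNormalDecomp φ x [x] := by
  refine ⟨List.cons_ne_nil _ _, List.prod_singleton, ?_, ?_, by simp⟩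
  · intro y hy
    obtain rfl := List.mem_singleton.mp hy
    cases i
    exacts [⟨hx, .inr hxi⟩, ⟨hx, .inl hxi⟩]
  · intro n y z _ hz
    simp at hz

end IsNormalDecomp

theorem eq_one_of_mem_of_inFactor_of_ne (hφ : ∀ i, Function.Injective (φ i))
    {H : Subgroup (PushoutI φ)} {i : Bool} (hle : H ≤ (PushoutI.of (φ := φ) i).range)
    (hinter : H ⊓ (PushoutI.base φ).range = ⊥) {x : PushoutI φ} (hxH : x ∈ H) {j : Bool}
    (hij : i ≠ j) (hxj : InFactor φ j x) : x = 1 := by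
  have hxbase : x ∈ H ⊓ (PushoutI.base φ).range :=
    ⟨hxH, PushoutI.inf_of_range_eq_base_range hφ hij ▸ ⟨hle hxH, hxj⟩⟩
  rwa [hinter, Subgroup.mem_bot] at hxbase

theorem essentialCosets_of_le_factor_trivial_base_inter_general
    (A : Type) [Group A] (Gf : Bool → Type) [∀ i, Group (Gf i)]
    (φ : ∀ i : Bool, A →* Gf i) (hφ : ∀ i, Function.Injective (φ i))
    (H : Subgroup (PushoutI φ)) (hne : H ≠ ⊥)
    (hle : H ≤ (PushoutI.of (φ := φ) true).range)
    (hinter : H ⊓ (PushoutI.base φ).range = ⊥) :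
    ∀ c : PushoutI φ, IsEssentialCoset φ H c ↔
      ∃ s ∈ (PushoutI.of (φ := φ) true).range, c * s⁻¹ ∈ H := by
  intro c
  constructor
  · rintro (hc | ⟨L, m, s, hL, hH, hm, ⟨i, x, hx, hxi, hsi⟩, hcs⟩)
    · exact ⟨c, hle hc, by simp⟩
    obtain ⟨h, rfl⟩ := hL.exists_eq_singleton_of_mem_range hφ (hle hH)
    obtain rfl : m = 0 := by simpa using hm
    obtain rfl : x = h := by simpa using hx.symm
    have hxH : x ∈ H := by simpa using hH
    obtain rfl : i = true := by
      by_contra hi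
      exact (hL.2.2.1 x List.mem_cons_self).1
        (eq_one_of_mem_of_inFactor_of_ne hφ hle hinter hxH (Ne.symm hi) hxi)
    exact ⟨s, hsi, by simpa using hcs⟩
  · rintro ⟨s, hs, hcs⟩
    obtain ⟨h, hhH, hh1⟩ := (Subgroup.bot_or_exists_ne_one H).resolve_left hne
    exact .inr ⟨[h], 0, s, by simpa using IsNormalDecomp.singleton hh1 (hle hhH), by simpa,
      Nat.one_pos, ⟨true, h, rfl, hle hhH, hs⟩, by simpa using hcs⟩

/-- Let `H` be a nontrivial subgroup of the amalgam `G = G₁ *_A G₂` of finite groups with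
`H ≤ ι₁(G₁)` and `H ∩ ι_A(A) = {1}`. Then the essential right cosets of `H` in `G` are
exactly the cosets `H·s` with `s ∈ ι₁(G₁)`. -/
theorem essentialCosets_of_le_factor_trivial_base_inter
    (A : Type) [Group A] (Gf : Bool → Type) [∀ i, Group (Gf i)] [∀ i, Finite (Gf i)]
    (φ : ∀ i : Bool, A →* Gf i) (hφ : ∀ i, Function.Injective (φ i))
    (H : Subgroup (PushoutI φ)) (hne : H ≠ ⊥)
    (hle : H ≤ (PushoutI.of (φ := φ) true).range)
    (hinter : H ⊓ (PushoutI.base φ).range = ⊥) :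
    ∀ c : PushoutI φ, IsEssentialCoset φ H c ↔
      ∃ s ∈ (PushoutI.of (φ := φ) true).range, c * s⁻¹ ∈ H :=
  essentialCosets_of_le_factor_trivial_base_inter_general A Gf φ hφ H hne hle hinter
end
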